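/- arXiv:2403.00230 — 6 statements merged into one kernel-verified Lean document; each statement's English description precedes it below -/
import Mathlib

section
/- Assume each Markov kernel M_j is reversible with respect to Π_j and ρ_j := ‖Π_{j-1}/Π_j‖_∞ < ∞. Then the kernel Q_j defines a bounded operator on L²(Π_{j-1}) with ∫ (Q_j f)² dΠ_{j-1} ≤ ρ_j² Π_{j-1}(f²), and Q_j is self-adjoint: for all f, h ∈ L²(Π_{j-1}), ⟨f, Q_j h⟩_{j-1} = ⟨h, Q_j f⟩_{j-1}. -/
/-!
Write `P v x = ∫ v dM(x)`, so that `Q f = P (P (f r))` and `Π_{j-1} = r Π_j`. Detailed balance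
makes `Π_j ⊗ M` invariant under swapping the coordinates. Its second marginal is then `Π_j`, so
`P` is a contraction of `L²(Π_j)` (Jensen in each fibre), and the swap identity
`∫ u(x) v(y) = ∫ v(x) u(y)` makes `P` self-adjoint on `L²(Π_j)`. Hence
`Π_{j-1}((Q f)²) ≤ ρ Π_j((P P (f r))²) ≤ ρ Π_j((f r)²) ≤ ρ² Π_{j-1}(f²)`, and
`⟨f, Q h⟩_{j-1} = ⟨f r, P P (h r)⟩_j = ⟨P (f r), P (h r)⟩_j` is symmetric in `f` and `h`.
-/

open MeasureTheory ProbabilityTheory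

/-- Reversibility of a kernel `M` with respect to a measure `π` (detailed balance). -/
def IsReversible {Θ : Type*} [MeasurableSpace Θ] (M : Kernel Θ Θ) (π : Measure Θ) : Prop :=
  ∀ A B : Set Θ, MeasurableSet A → MeasurableSet B →
    ∫⁻ x in A, M x B ∂π = ∫⁻ x in B, M x A ∂π

/-- The operator induced by the finite kernel `Q_j`:
`Q f(x) = ∫ M(x,dy) ∫ M(y,dz) f(z) r(z)` where `r = Π_{j-1}/Π_j`. -/
noncomputable def Qop {Θ : Type*} [MeasurableSpace Θ] (M : Kernel Θ Θ) (r : Θ → ℝ)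
    (f : Θ → ℝ) (x : Θ) : ℝ :=
  ∫ y, (∫ z, f z * r z ∂(M y)) ∂(M x)

open scoped ENNReal

section

variable {Θ : Type*} [MeasurableSpace Θ]

lemma ENNReal.ofReal_mul_self_le (a : ℝ) :
    ENNReal.ofReal a * ENNReal.ofReal a ≤ ENNReal.ofReal (a ^ 2) := by
  rcases le_total 0 a with ha | ha
  · rw [sq, ENNReal.ofReal_mul ha]
  · simp [ENNReal.ofReal_of_nonpos ha]

lemma integrable_sq_iff_lintegral_ofReal_sq_lt_top {μ : Measure Θ} {g : Θ → ℝ}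
    (hg : AEStronglyMeasurable g μ) :
    Integrable (fun x => g x ^ 2) μ ↔ ∫⁻ x, ENNReal.ofReal (g x ^ 2) ∂μ < ∞ := by
  rw [Integrable, hasFiniteIntegral_iff_ofReal (ae_of_all _ fun x => sq_nonneg (g x))]
  exact and_iff_right (hg.pow 2)

lemma memLp_two_iff_lintegral_ofReal_sq_lt_top {μ : Measure Θ} {g : Θ → ℝ}
    (hg : AEStronglyMeasurable g μ) :
    MemLp g 2 μ ↔ ∫⁻ x, ENNReal.ofReal (g x ^ 2) ∂μ < ∞ := by
  rw [memLp_two_iff_integrable_sq hg, integrable_sq_iff_lintegral_ofReal_sq_lt_top hg]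

lemma integrable_sq_and_integral_sq_le {μ : Measure Θ} {g f : Θ → ℝ} {c : ℝ}
    (hg : AEStronglyMeasurable g μ) (hf : AEStronglyMeasurable f μ)
    (hf2 : Integrable (fun x => f x ^ 2) μ) (hc : 0 ≤ c)
    (h : ∫⁻ x, ENNReal.ofReal (g x ^ 2) ∂μ ≤
      ENNReal.ofReal c * ∫⁻ x, ENNReal.ofReal (f x ^ 2) ∂μ) :
    Integrable (fun x => g x ^ 2) μ ∧ ∫ x, g x ^ 2 ∂μ ≤ c * ∫ x, f x ^ 2 ∂μ := by
  have hfin : ENNReal.ofReal c * ∫⁻ x, ENNReal.ofReal (f x ^ 2) ∂μ ≠ ∞ :=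
    ENNReal.mul_ne_top ENNReal.ofReal_ne_top
      ((integrable_sq_iff_lintegral_ofReal_sq_lt_top hf).1 hf2).ne
  refine ⟨(integrable_sq_iff_lintegral_ofReal_sq_lt_top hg).2 (h.trans_lt hfin.lt_top), ?_⟩
  rw [integral_eq_lintegral_of_nonneg_ae (ae_of_all _ fun x => sq_nonneg (g x)) (hg.pow 2),
    integral_eq_lintegral_of_nonneg_ae (ae_of_all _ fun x => sq_nonneg (f x)) (hf.pow 2),
    ← ENNReal.toReal_ofReal hc, ← ENNReal.toReal_mul]
  exact ENNReal.toReal_mono hfin h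

lemma ofReal_sq_integral_le_lintegral (μ : Measure Θ) [IsProbabilityMeasure μ] {g : Θ → ℝ}
    (hg : AEStronglyMeasurable g μ) :
    ENNReal.ofReal ((∫ x, g x ∂μ) ^ 2) ≤ ∫⁻ x, ENNReal.ofReal (g x ^ 2) ∂μ := by
  by_cases hg2 : Integrable (fun x => g x ^ 2) μ
  · have hg1 : Integrable g μ :=
      ((memLp_two_iff_integrable_sq hg).2 hg2).integrable one_le_two
    rw [← ofReal_integral_eq_lintegral_ofReal hg2 (ae_of_all _ fun x => sq_nonneg (g x))]
    exact ENNReal.ofReal_le_ofReal <| (even_two.convexOn_pow (𝕜 := ℝ)).map_integral_le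
      (continuous_pow 2).continuousOn isClosed_univ (ae_of_all _ fun _ => trivial) hg1 hg2
  · rw [integrable_sq_iff_lintegral_ofReal_sq_lt_top hg, not_lt, top_le_iff] at hg2
    simp [hg2]

lemma Measurable.integral_kernel {α β : Type*} [MeasurableSpace α] [MeasurableSpace β]
    {κ : Kernel α β} {v : β → ℝ} (hv : Measurable v) : Measurable fun x => ∫ y, v y ∂κ x :=
  hv.stronglyMeasurable.integral_kernel.measurable

section Density

variable {π : Measure Θ} {r : Θ → ℝ} {ρ : ℝ}

lemma lintegral_withDensity_ofReal_le (hρ : ∀ z, r z ≤ ρ) (g : Θ → ℝ≥0∞) :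
    ∫⁻ x, g x ∂π.withDensity (fun z => ENNReal.ofReal (r z)) ≤
      ENNReal.ofReal ρ * ∫⁻ x, g x ∂π := by
  rw [← smul_eq_mul, ← lintegral_smul_measure, ← withDensity_const]
  exact lintegral_mono' (withDensity_mono (ae_of_all _ fun z => ENNReal.ofReal_le_ofReal (hρ z)))
    le_rfl

lemma integral_withDensity_ofReal (hr : Measurable r) (hr0 : ∀ z, 0 ≤ r z) (w : Θ → ℝ) :
    ∫ x, w x ∂π.withDensity (fun z => ENNReal.ofReal (r z)) = ∫ x, r x * w x ∂π := by
  rw [integral_withDensity_eq_integral_toReal_smul hr.ennreal_ofReal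
    (ae_of_all _ fun _ => ENNReal.ofReal_lt_top)]
  simp_rw [ENNReal.toReal_ofReal (hr0 _), smul_eq_mul]

lemma lintegral_ofReal_sq_mul_le (hr : Measurable r) (hr0 : ∀ z, 0 ≤ r z) (hρ : ∀ z, r z ≤ ρ)
    {f : Θ → ℝ} (hf : Measurable f) :
    ∫⁻ x, ENNReal.ofReal ((f x * r x) ^ 2) ∂π ≤
      ENNReal.ofReal ρ *
        ∫⁻ x, ENNReal.ofReal (f x ^ 2) ∂π.withDensity (fun z => ENNReal.ofReal (r z)) := by
  rw [lintegral_withDensity_eq_lintegral_mul _ hr.ennreal_ofReal (hf.pow_const 2).ennreal_ofReal,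
    ← lintegral_const_mul' _ _ ENNReal.ofReal_ne_top]
  refine lintegral_mono fun x => ?_
  have hrf : 0 ≤ r x * f x ^ 2 := mul_nonneg (hr0 x) (sq_nonneg (f x))
  rw [Pi.mul_apply, ← ENNReal.ofReal_mul (hr0 x), ← ENNReal.ofReal_mul ((hr0 x).trans (hρ x))]
  exact ENNReal.ofReal_le_ofReal <| calc
    (f x * r x) ^ 2 = r x * (r x * f x ^ 2) := by ring
    _ ≤ ρ * (r x * f x ^ 2) := mul_le_mul_of_nonneg_right (hρ x) hrf

lemma memLp_two_mul_of_integrable_sq (hr : Measurable r) (hr0 : ∀ z, 0 ≤ r z)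
    (hρ : ∀ z, r z ≤ ρ) {f : Θ → ℝ} (hf : Measurable f)
    (hf2 : Integrable (fun x => f x ^ 2) (π.withDensity fun z => ENNReal.ofReal (r z))) :
    MemLp (fun x => f x * r x) 2 π := by
  rw [memLp_two_iff_lintegral_ofReal_sq_lt_top (g := fun x => f x * r x)
    (hf.mul hr).aestronglyMeasurable]
  rw [integrable_sq_iff_lintegral_ofReal_sq_lt_top hf.aestronglyMeasurable] at hf2
  exact (lintegral_ofReal_sq_mul_le hr hr0 hρ hf).trans_lt
    (ENNReal.mul_lt_top ENNReal.ofReal_lt_top hf2)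

end Density

namespace IsReversible

variable {π : Measure Θ} {M : Kernel Θ Θ} [IsMarkovKernel M] {r : Θ → ℝ} {ρ : ℝ}

lemma comp_eq (h : IsReversible M π) : M ∘ₘ π = π :=
  Kernel.IsReversible.invariant (fun A B hA hB => h A B hA hB)

lemma lintegral_lintegral (h : IsReversible M π) {g : Θ → ℝ≥0∞} (hg : Measurable g) :
    ∫⁻ x, ∫⁻ y, g y ∂M x ∂π = ∫⁻ x, g x ∂π := by
  conv_rhs => rw [← h.comp_eq]
  exact (Measure.lintegral_bind M.aemeasurable hg.aemeasurable).symm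

lemma lintegral_sq_integral_le (h : IsReversible M π) {v : Θ → ℝ} (hv : Measurable v) :
    ∫⁻ x, ENNReal.ofReal ((∫ y, v y ∂M x) ^ 2) ∂π ≤ ∫⁻ x, ENNReal.ofReal (v x ^ 2) ∂π :=
  (lintegral_mono fun x => ofReal_sq_integral_le_lintegral (M x) hv.aestronglyMeasurable).trans_eq
    (h.lintegral_lintegral (hv.pow_const 2).ennreal_ofReal)

lemma memLp_integral (h : IsReversible M π) {v : Θ → ℝ} (hv : Measurable v)
    (hv2 : MemLp v 2 π) : MemLp (fun x => ∫ y, v y ∂M x) 2 π := by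
  rw [memLp_two_iff_lintegral_ofReal_sq_lt_top hv.integral_kernel.aestronglyMeasurable]
  rw [memLp_two_iff_lintegral_ofReal_sq_lt_top hv.aestronglyMeasurable] at hv2
  exact (h.lintegral_sq_integral_le hv).trans_lt hv2

lemma lintegral_sq_Qop_le (h : IsReversible M π) (hr : Measurable r) (hr0 : ∀ z, 0 ≤ r z)
    (hρ : ∀ z, r z ≤ ρ) {f : Θ → ℝ} (hf : Measurable f) :
    ∫⁻ x, ENNReal.ofReal (Qop M r f x ^ 2) ∂π.withDensity (fun z => ENNReal.ofReal (r z)) ≤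
      ENNReal.ofReal (ρ ^ 2) *
        ∫⁻ x, ENNReal.ofReal (f x ^ 2) ∂π.withDensity (fun z => ENNReal.ofReal (r z)) := by
  have hfr : Measurable fun z => f z * r z := hf.mul hr
  calc _ ≤ ENNReal.ofReal ρ * ∫⁻ x, ENNReal.ofReal (Qop M r f x ^ 2) ∂π :=
        lintegral_withDensity_ofReal_le hρ _
    _ ≤ ENNReal.ofReal ρ * ∫⁻ x, ENNReal.ofReal ((f x * r x) ^ 2) ∂π := by
        gcongr ENNReal.ofReal ρ * ?_
        exact (h.lintegral_sq_integral_le hfr.integral_kernel).trans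
          (h.lintegral_sq_integral_le hfr)
    _ ≤ ENNReal.ofReal ρ * (ENNReal.ofReal ρ *
          ∫⁻ x, ENNReal.ofReal (f x ^ 2) ∂π.withDensity (fun z => ENNReal.ofReal (r z))) := by
        gcongr
        exact lintegral_ofReal_sq_mul_le hr hr0 hρ hf
    _ ≤ _ := by
        rw [← mul_assoc]
        gcongr
        exact ENNReal.ofReal_mul_self_le ρ

variable [IsFiniteMeasure π]

lemma map_swap_compProd (h : IsReversible M π) : (π ⊗ₘ M).map Prod.swap = π ⊗ₘ M := by
  refine ext_of_generate_finite _ generateFrom_prod.symm isPiSystem_prod ?_ ?_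
  · rintro _ ⟨A, hA, B, hB, rfl⟩
    rw [Measure.map_apply measurable_swap (hA.prod hB), Set.preimage_swap_prod,
      Measure.compProd_apply_prod hB hA, Measure.compProd_apply_prod hA hB]
    exact h B A hB hA
  · rw [Measure.map_apply measurable_swap MeasurableSet.univ, Set.preimage_univ]

lemma integral_mul_integral_comm (h : IsReversible M π) {u v : Θ → ℝ}
    (hu2 : MemLp u 2 π) (hv2 : MemLp v 2 π) :
    ∫ x, u x * ∫ y, v y ∂M x ∂π = ∫ x, v x * ∫ y, u y ∂M x ∂π := by
  have hfst (w : Θ → ℝ) (hw : MemLp w 2 π) : MemLp (fun p : Θ × Θ => w p.1) 2 (π ⊗ₘ M) :=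
    (show MemLp w 2 (π ⊗ₘ M).fst by rwa [Measure.fst_compProd]).comp_of_map
      measurable_fst.aemeasurable
  have hsnd (w : Θ → ℝ) (hw : MemLp w 2 π) : MemLp (fun p : Θ × Θ => w p.2) 2 (π ⊗ₘ M) :=
    (show MemLp w 2 (π ⊗ₘ M).snd by rwa [Measure.snd_compProd, h.comp_eq]).comp_of_map
      measurable_snd.aemeasurable
  have huv : Integrable (fun p : Θ × Θ => u p.1 * v p.2) (π ⊗ₘ M) :=
    (hfst u hu2).integrable_mul (hsnd v hv2)
  have hvu : Integrable (fun p : Θ × Θ => v p.1 * u p.2) (π ⊗ₘ M) :=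
    (hfst v hv2).integrable_mul (hsnd u hu2)
  calc ∫ x, u x * ∫ y, v y ∂M x ∂π = ∫ p, u p.1 * v p.2 ∂(π ⊗ₘ M) := by
        simp_rw [Measure.integral_compProd huv, integral_const_mul]
    _ = ∫ p, v p.swap.1 * u p.swap.2 ∂(π ⊗ₘ M) := by
        simp_rw [Prod.fst_swap, Prod.snd_swap, mul_comm]
    _ = ∫ p, v p.1 * u p.2 ∂((π ⊗ₘ M).map Prod.swap) :=
        (integral_map measurable_swap.aemeasurable
          (h.map_swap_compProd ▸ hvu.aestronglyMeasurable)).symm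
    _ = ∫ x, v x * ∫ y, u y ∂M x ∂π := by
        simp_rw [h.map_swap_compProd, Measure.integral_compProd hvu, integral_const_mul]

lemma integral_mul_Qop (h : IsReversible M π) (hr : Measurable r)
    (hr0 : ∀ z, 0 ≤ r z) (hρ : ∀ z, r z ≤ ρ) {f g : Θ → ℝ} (hf : Measurable f) (hg : Measurable g)
    (hf2 : Integrable (fun x => f x ^ 2) (π.withDensity fun z => ENNReal.ofReal (r z)))
    (hg2 : Integrable (fun x => g x ^ 2) (π.withDensity fun z => ENNReal.ofReal (r z))) :
    ∫ x, f x * Qop M r g x ∂π.withDensity (fun z => ENNReal.ofReal (r z)) =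
      ∫ x, (∫ y, g y * r y ∂M x) * ∫ y, f y * r y ∂M x ∂π := by
  rw [integral_withDensity_ofReal hr hr0]
  calc ∫ x, r x * (f x * Qop M r g x) ∂π
      = ∫ x, (f x * r x) * ∫ y, (∫ z, g z * r z ∂M y) ∂M x ∂π := by
        congr 1 with x
        rw [Qop]
        ring
    _ = _ := h.integral_mul_integral_comm (memLp_two_mul_of_integrable_sq hr hr0 hρ hf hf2)
        (h.memLp_integral (hg.mul hr) (memLp_two_mul_of_integrable_sq hr hr0 hρ hg hg2))

end IsReversible

end

theorem Qop_bounded_and_selfAdjoint_general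
    {Θ : Type*} [MeasurableSpace Θ]
    (πprev πcur : Measure Θ)
    (hπcur : IsProbabilityMeasure πcur)
    (M : Kernel Θ Θ) (hM : IsMarkovKernel M)
    (hrev : IsReversible M πcur)
    (r : Θ → ℝ) (hrmeas : Measurable r) (hrnonneg : ∀ z, 0 ≤ r z)
    (hdens : πprev = πcur.withDensity (fun z => ENNReal.ofReal (r z)))
    (ρ : ℝ) (hρ : ∀ z, r z ≤ ρ) :
    (∀ f : Θ → ℝ, Measurable f → Integrable (fun x => (f x) ^ 2) πprev →
      Integrable (fun x => (Qop M r f x) ^ 2) πprev ∧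
      (∫ x, (Qop M r f x) ^ 2 ∂πprev) ≤ ρ ^ 2 * ∫ x, (f x) ^ 2 ∂πprev) ∧
    (∀ f h : Θ → ℝ, Measurable f → Measurable h →
      Integrable (fun x => (f x) ^ 2) πprev → Integrable (fun x => (h x) ^ 2) πprev →
      (∫ x, f x * Qop M r h x ∂πprev) = ∫ x, h x * Qop M r f x ∂πprev) := by
  subst hdens
  refine ⟨fun f hf hf2 => ?_, fun f h hf hh hf2 hh2 => ?_⟩
  · have hQ : Measurable (Qop M r f) := (hf.mul hrmeas).integral_kernel.integral_kernel
    exact integrable_sq_and_integral_sq_le hQ.aestronglyMeasurable hf.aestronglyMeasurable hf2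
      (sq_nonneg ρ) (hrev.lintegral_sq_Qop_le hrmeas hrnonneg hρ hf)
  · rw [hrev.integral_mul_Qop hrmeas hrnonneg hρ hf hh hf2 hh2,
      hrev.integral_mul_Qop hrmeas hrnonneg hρ hh hf hh2 hf2]
    simp_rw [mul_comm]

theorem Qop_bounded_and_selfAdjoint
    {Θ : Type*} [MeasurableSpace Θ]
    (πprev πcur : Measure Θ)
    (hπprev : IsProbabilityMeasure πprev) (hπcur : IsProbabilityMeasure πcur)
    (M : Kernel Θ Θ) (hM : IsMarkovKernel M)
    (hrev : IsReversible M πcur)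
    (r : Θ → ℝ) (hrmeas : Measurable r) (hrnonneg : ∀ z, 0 ≤ r z)
    (hdens : πprev = πcur.withDensity (fun z => ENNReal.ofReal (r z)))
    (ρ : ℝ) (hρ : ∀ z, r z ≤ ρ) :
    (∀ f : Θ → ℝ, Measurable f → Integrable (fun x => (f x) ^ 2) πprev →
      Integrable (fun x => (Qop M r f x) ^ 2) πprev ∧
      (∫ x, (Qop M r f x) ^ 2 ∂πprev) ≤ ρ ^ 2 * ∫ x, (f x) ^ 2 ∂πprev) ∧
    (∀ f h : Θ → ℝ, Measurable f → Measurable h →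
      Integrable (fun x => (f x) ^ 2) πprev → Integrable (fun x => (h x) ^ 2) πprev →
      (∫ x, f x * Qop M r h x ∂πprev) = ∫ x, h x * Qop M r f x ∂πprev) :=
  Qop_bounded_and_selfAdjoint_general πprev πcur hπcur M hM hrev r hrmeas hrnonneg hdens ρ hρ
end

section
/- Assume each Markov kernel M_j is reversible with respect to Π_j and ‖Π_{j-1}/Π_j‖_∞ < ∞. Then the spectral gap λ_j of the operator Q_j satisfies λ_j ≤ 1 + α_j, where α_j is the discrepancy coefficient between Π_{j-1} and Π_j. -/
open MeasureTheory ProbabilityTheory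

/-- The finite kernel `Q_j(x, ·) = ∫ M(x,dy) ∫_· M(y,dz) r(z)` where `r = Π_{j-1}/Π_j`. -/
noncomputable def Qmeas {Θ : Type*} [MeasurableSpace Θ] (M : Kernel Θ Θ) (r : Θ → ℝ)
    (x : Θ) : Measure Θ :=
  (M x).bind (fun y => (M y).withDensity (fun z => ENNReal.ofReal (r z)))

/-- `Var_π(f) = π(f²) − π(f)²`. -/
noncomputable def varI {Θ : Type*} [MeasurableSpace Θ] (π : Measure Θ) (f : Θ → ℝ) : ℝ :=
  (∫ x, (f x) ^ 2 ∂π) - (∫ x, f x ∂π) ^ 2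

/-- The discrepancy coefficient
`α_j = sup{ ∫ Π_{j-1}(dx) f²(x) ∫ M_j²(x,dz) |r(z) − 1| : f ∈ L²(Π_{j-1}), Π_{j-1}(f²) = 1 }`. -/
noncomputable def discrepancy {Θ : Type*} [MeasurableSpace Θ] (πprev : Measure Θ)
    (M : Kernel Θ Θ) (r : Θ → ℝ) : ℝ :=
  sSup {a : ℝ | ∃ f : Θ → ℝ, Measurable f ∧ Integrable (fun x => (f x) ^ 2) πprev ∧
    (∫ x, (f x) ^ 2 ∂πprev) = 1 ∧
    a = ∫ x, (f x) ^ 2 * (∫ z, |r z - 1| ∂((M x).bind (fun y => M y))) ∂πprev}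

/-- The spectral gap `λ_j = inf{ G_j(f) : f ∈ L²(Π_{j-1}), Var_{j-1}(f) > 0 }` of `Q_j`. -/
noncomputable def specGap {Θ : Type*} [MeasurableSpace Θ] (πprev : Measure Θ)
    (M : Kernel Θ Θ) (r : Θ → ℝ) : ℝ :=
  sInf {g : ℝ | ∃ f : Θ → ℝ, Measurable f ∧ Integrable (fun x => (f x) ^ 2) πprev ∧
    0 < varI πprev f ∧
    g = (∫ x, (∫ y, (f y - f x) ^ 2 ∂(Qmeas M r x)) ∂πprev) /
        (∫ x, (∫ y, (f y - f x) ^ 2 ∂πprev) ∂πprev)}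

open scoped ENNReal

/-!
Write `Π_{j-1} = r Π_j`, so that `Q_j(x, dz) = M_j²(x, dz) r(z)`. Reversibility lets the two-step
chain `x → y → z` be re-rooted at its midpoint `y`: under `Π_{j-1}(dx) Q_j(x, dz)` the endpoints
`x` and `z` become two independent draws from the finite measure `m_y = r · M_j(y, ·)`, with `y`
distributed according to `Π_j`. For a finite measure `m`,
`∫∫ (f z - f x)² m(dx) m(dz) ≤ 2 m(Θ) ∫ f² dm` (a variance is at most a second moment), and
re-rooting back bounds the numerator of `G_j(f)` by `2 ∫ Π_{j-1}(dx) f(x)² Q_j(x, Θ)`. Since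
`Q_j(x, Θ) = ∫ M_j²(x, dz) r(z) ≤ 1 + ∫ M_j²(x, dz) |r(z) - 1|`, this is at most
`2 Π_{j-1}(f²) (1 + α_j)`. Applying it to `f - Π_{j-1}(f)`, which leaves the numerator unchanged,
and dividing by the denominator `2 Var_{j-1}(f)` gives `G_j(f) ≤ 1 + α_j`.
-/

section Variance

variable {α : Type*} [MeasurableSpace α] {μ : Measure α}

theorem ofReal_integral_le_lintegral_ofReal {f : α → ℝ} (hf : 0 ≤ᵐ[μ] f) :
    ENNReal.ofReal (∫ x, f x ∂μ) ≤ ∫⁻ x, ENNReal.ofReal (f x) ∂μ := by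
  by_cases hi : Integrable f μ
  · exact (ofReal_integral_eq_lintegral_ofReal hi hf).le
  · simp [integral_undef hi]

variable [IsFiniteMeasure μ] {f : α → ℝ}

theorem integral_sub_const_sq (hf : MemLp f 2 μ) (c : ℝ) :
    ∫ x, (f x - c) ^ 2 ∂μ = ∫ x, f x ^ 2 ∂μ - 2 * c * ∫ x, f x ∂μ + c ^ 2 * μ.real Set.univ := by
  have hf1 : Integrable (fun x => 2 * c * f x) μ := (hf.integrable one_le_two).const_mul _
  have hf2 : Integrable (fun x => f x ^ 2 - 2 * c * f x) μ := hf.integrable_sq.sub hf1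
  calc ∫ x, (f x - c) ^ 2 ∂μ = ∫ x, (f x ^ 2 - 2 * c * f x + c ^ 2) ∂μ := by
        congr 1; ext x; ring
    _ = _ := by
        rw [integral_add hf2 (integrable_const _), integral_sub hf.integrable_sq hf1,
          integral_const_mul, integral_const, smul_eq_mul]
        ring

theorem integrable_integral_sub_sq (hf : MemLp f 2 μ) :
    Integrable (fun x => ∫ y, (f y - f x) ^ 2 ∂μ) μ := by
  simp_rw [integral_sub_const_sq hf]
  exact ((integrable_const _).sub ((hf.integrable one_le_two).const_mul _ |>.mul_const _)).add
    (hf.integrable_sq.mul_const _)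

theorem integral_integral_sub_sq (hf : MemLp f 2 μ) :
    ∫ x, ∫ y, (f y - f x) ^ 2 ∂μ ∂μ =
      2 * (μ.real Set.univ * ∫ x, f x ^ 2 ∂μ - (∫ x, f x ∂μ) ^ 2) := by
  set m := ∫ x, f x ∂μ
  have hf1 : Integrable (fun x => 2 * f x * m) μ :=
    ((hf.integrable one_le_two).const_mul _).mul_const _
  have hf2 : Integrable (fun x => ∫ x, f x ^ 2 ∂μ - 2 * f x * m) μ := (integrable_const _).sub hf1
  simp_rw [integral_sub_const_sq hf]
  rw [integral_add hf2 (hf.integrable_sq.mul_const _), integral_sub (integrable_const _) hf1,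
    integral_const, integral_mul_const, integral_mul_const, integral_const_mul, smul_eq_mul]
  ring

theorem lintegral_lintegral_ofReal_sub_sq_le (hf : Measurable f) :
    ∫⁻ x, ∫⁻ y, ENNReal.ofReal ((f y - f x) ^ 2) ∂μ ∂μ ≤
      2 * μ Set.univ * ∫⁻ x, ENNReal.ofReal (f x ^ 2) ∂μ := by
  rcases eq_zero_or_neZero μ with rfl | hμ
  · simp
  by_cases hf2 : ∫⁻ x, ENNReal.ofReal (f x ^ 2) ∂μ = ∞
  · rw [hf2, ENNReal.mul_top (by simp [hμ.out])]
    exact le_top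
  have hL2 : MemLp f 2 μ := (memLp_two_iff_integrable_sq hf.aestronglyMeasurable).2
    ⟨(hf.pow_const 2).aestronglyMeasurable,
      (hasFiniteIntegral_iff_ofReal (ae_of_all _ fun _ => sq_nonneg _)).2 (lt_top_iff_ne_top.2 hf2)⟩
  have hinner : ∀ x, ∫⁻ y, ENNReal.ofReal ((f y - f x) ^ 2) ∂μ =
      ENNReal.ofReal (∫ y, (f y - f x) ^ 2 ∂μ) := fun x =>
    (ofReal_integral_eq_lintegral_ofReal (hL2.sub (memLp_const (f x))).integrable_sq
      (ae_of_all _ fun _ => sq_nonneg _)).symm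
  simp_rw [hinner]
  rw [← ofReal_integral_eq_lintegral_ofReal (integrable_integral_sub_sq hL2)
      (ae_of_all _ fun _ => integral_nonneg fun _ => sq_nonneg _),
    integral_integral_sub_sq hL2, ← ofReal_integral_eq_lintegral_ofReal hL2.integrable_sq
      (ae_of_all _ fun _ => sq_nonneg _), ← ofReal_measureReal, ← ENNReal.ofReal_ofNat 2,
    ← ENNReal.ofReal_mul zero_le_two, ← ENNReal.ofReal_mul (by positivity)]
  apply ENNReal.ofReal_le_ofReal
  nlinarith [sq_nonneg (∫ x, f x ∂μ)]

end Variance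

theorem Measurable.lintegral_kernel_snd {α β γ : Type*} [MeasurableSpace α] [MeasurableSpace β]
    [MeasurableSpace γ] {κ : Kernel β γ} [IsSFiniteKernel κ] {G : α → γ → ℝ≥0∞}
    (hG : Measurable (Function.uncurry G)) :
    Measurable fun p : α × β => ∫⁻ z, G p.1 z ∂κ p.2 :=
  Measurable.lintegral_kernel_prod_right' (κ := Kernel.prodMkLeft α κ)
    (f := fun q => G q.1.1 q.2) (hG.comp (measurable_fst.fst.prodMk measurable_snd))

section

variable {Θ : Type*} [MeasurableSpace Θ] {M : Kernel Θ Θ} {π : Measure Θ} {r : Θ → ℝ} {ρ : ℝ}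

theorem IsReversible.compProd_map_swap [IsFiniteMeasure π] [IsFiniteKernel M]
    (hrev : IsReversible M π) :
    (π ⊗ₘ M).map Prod.swap = π ⊗ₘ M := by
  refine ext_of_generate_finite _ generateFrom_prod.symm isPiSystem_prod ?_ ?_
  · rintro _ ⟨s, hs, t, ht, rfl⟩
    rw [Measure.map_apply measurable_swap (hs.prod ht), Set.preimage_swap_prod,
      Measure.compProd_apply_prod ht hs, Measure.compProd_apply_prod hs ht, hrev t s ht hs]
  · rw [Measure.map_apply measurable_swap MeasurableSet.univ, Set.preimage_univ]

theorem IsReversible.lintegral_lintegral_swap [IsFiniteMeasure π] [IsFiniteKernel M]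
    (hrev : IsReversible M π) {F : Θ → Θ → ℝ≥0∞} (hF : Measurable (Function.uncurry F)) :
    ∫⁻ x, ∫⁻ y, F x y ∂M x ∂π = ∫⁻ x, ∫⁻ y, F y x ∂M x ∂π := calc
  _ = ∫⁻ p, Function.uncurry F p ∂(π ⊗ₘ M) := (Measure.lintegral_compProd hF).symm
  _ = ∫⁻ p, Function.uncurry F p.swap ∂(π ⊗ₘ M) := by
    rw [← lintegral_map hF measurable_swap, hrev.compProd_map_swap]
  _ = _ := Measure.lintegral_compProd (hF.comp measurable_swap)

theorem Qmeas_eq_comp [IsSFiniteKernel M] (hr : Measurable r) :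
    Qmeas M r = ⇑(M.withDensity (fun _ z => ENNReal.ofReal (r z)) ∘ₖ M) := by
  have hR : Measurable (Function.uncurry fun (_ : Θ) z => ENNReal.ofReal (r z)) :=
    hr.ennreal_ofReal.comp measurable_snd
  ext1 x
  rw [Kernel.comp_apply, Qmeas]
  congr 1
  ext1 y
  rw [Kernel.withDensity_apply _ hR]

theorem lintegral_Qmeas [IsSFiniteKernel M] (hr : Measurable r) (x : Θ) {g : Θ → ℝ≥0∞}
    (hg : Measurable g) :
    ∫⁻ z, g z ∂Qmeas M r x = ∫⁻ y, ∫⁻ z, ENNReal.ofReal (r z) * g z ∂M y ∂M x := by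
  have hR : Measurable (Function.uncurry fun (_ : Θ) z => ENNReal.ofReal (r z)) :=
    hr.ennreal_ofReal.comp measurable_snd
  rw [Qmeas_eq_comp hr, Kernel.lintegral_comp _ _ _ hg]
  simp_rw [fun y => Kernel.lintegral_withDensity M hR y hg]

theorem IsReversible.lintegral_lintegral_Qmeas [IsFiniteMeasure π] [IsFiniteKernel M]
    (hrev : IsReversible M π) (hr : Measurable r) {F : Θ → Θ → ℝ≥0∞}
    (hF : Measurable (Function.uncurry F)) :
    ∫⁻ x, ∫⁻ z, F x z ∂Qmeas M r x ∂π.withDensity (fun z => ENNReal.ofReal (r z)) =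
      ∫⁻ y, ∫⁻ x, ∫⁻ z, F x z ∂(M y).withDensity (fun z => ENNReal.ofReal (r z))
        ∂(M y).withDensity (fun z => ENNReal.ofReal (r z)) ∂π := by
  set R : Θ → ℝ≥0∞ := fun z => ENNReal.ofReal (r z)
  have hR : Measurable R := hr.ennreal_ofReal
  have hRfin : ∀ {ν : Measure Θ}, ∀ᵐ x ∂ν, R x < ∞ := ae_of_all _ fun _ => ENNReal.ofReal_lt_top
  have hRF : Measurable (Function.uncurry fun x z => R z * F x z) := by fun_prop
  calc _ = ∫⁻ x, ∫⁻ y, R x * ∫⁻ z, R z * F x z ∂M y ∂M x ∂π := by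
        rw [lintegral_withDensity_eq_lintegral_mul_non_measurable _ hR hRfin]
        refine lintegral_congr fun x => ?_
        rw [Pi.mul_apply, lintegral_Qmeas hr x (by fun_prop),
          lintegral_const_mul' _ _ ENNReal.ofReal_ne_top]
    _ = ∫⁻ y, ∫⁻ x, R x * ∫⁻ z, R z * F x z ∂M y ∂M y ∂π :=
        hrev.lintegral_lintegral_swap ((hR.comp measurable_fst).mul hRF.lintegral_kernel_snd)
    _ = _ := by
        refine lintegral_congr fun y => ?_
        rw [lintegral_withDensity_eq_lintegral_mul_non_measurable _ hR hRfin]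
        refine lintegral_congr fun x => ?_
        rw [Pi.mul_apply, lintegral_withDensity_eq_lintegral_mul_non_measurable _ hR hRfin]
        rfl

theorem lintegral_lintegral_Qmeas_ofReal_sub_sq_le [IsFiniteMeasure π] [IsFiniteKernel M]
    (hrev : IsReversible M π) (hr : Measurable r) (hρ : ∀ z, r z ≤ ρ) {f : Θ → ℝ}
    (hf : Measurable f) :
    ∫⁻ x, ∫⁻ y, ENNReal.ofReal ((f y - f x) ^ 2) ∂Qmeas M r x
        ∂π.withDensity (fun z => ENNReal.ofReal (r z)) ≤
      2 * ∫⁻ x, ENNReal.ofReal (f x ^ 2) * Qmeas M r x Set.univ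
        ∂π.withDensity (fun z => ENNReal.ofReal (r z)) := by
  set R : Θ → ℝ≥0∞ := fun z => ENNReal.ofReal (r z)
  have hfin (y : Θ) : IsFiniteMeasure ((M y).withDensity R) := by
    refine isFiniteMeasure_withDensity (ne_top_of_le_ne_top (b := ∫⁻ _, ENNReal.ofReal ρ ∂M y) ?_
      (lintegral_mono fun z => ENNReal.ofReal_le_ofReal (hρ z)))
    rw [lintegral_const]
    finiteness
  calc _ = ∫⁻ y, ∫⁻ x, ∫⁻ z, ENNReal.ofReal ((f z - f x) ^ 2) ∂(M y).withDensity R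
          ∂(M y).withDensity R ∂π := hrev.lintegral_lintegral_Qmeas hr (by fun_prop)
    _ ≤ ∫⁻ y, 2 * (M y).withDensity R Set.univ *
          ∫⁻ x, ENNReal.ofReal (f x ^ 2) ∂(M y).withDensity R ∂π :=
        lintegral_mono fun y => lintegral_lintegral_ofReal_sub_sq_le hf
    _ = 2 * ∫⁻ y, ∫⁻ x, ∫⁻ _, ENNReal.ofReal (f x ^ 2) ∂(M y).withDensity R
          ∂(M y).withDensity R ∂π := by
        simp_rw [lintegral_const, lintegral_mul_const _ (hf.pow_const 2).ennreal_ofReal, mul_assoc,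
          lintegral_const_mul' _ _ ENNReal.ofNat_ne_top, mul_comm]
    _ = _ := by
        rw [← hrev.lintegral_lintegral_Qmeas hr (by fun_prop)]
        simp_rw [lintegral_const]
        rfl

noncomputable def discrepancyWeight (M : Kernel Θ Θ) (r : Θ → ℝ) (x : Θ) : ℝ :=
  ∫ z, |r z - 1| ∂((M x).bind fun y => M y)

theorem discrepancyWeight_eq (x : Θ) :
    discrepancyWeight M r x = ∫ z, |r z - 1| ∂(M ∘ₖ M) x := by
  rw [Kernel.comp_apply]
  rfl

theorem discrepancyWeight_nonneg (x : Θ) : 0 ≤ discrepancyWeight M r x :=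
  integral_nonneg fun _ => abs_nonneg _

theorem stronglyMeasurable_discrepancyWeight (hr : Measurable r) :
    StronglyMeasurable (discrepancyWeight M r) := by
  simp_rw [funext discrepancyWeight_eq]
  exact ((hr.sub_const 1).abs).stronglyMeasurable.integral_kernel

theorem integrable_abs_sub_one (hr : Measurable r) (hr0 : ∀ z, 0 ≤ r z) (hρ : ∀ z, r z ≤ ρ)
    (ν : Measure Θ) [IsFiniteMeasure ν] : Integrable (fun z => |r z - 1|) ν := by
  refine .of_bound ((hr.sub_const 1).abs).aestronglyMeasurable (ρ + 1) (ae_of_all _ fun z => ?_)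
  rw [Real.norm_eq_abs, abs_abs, abs_le]
  constructor <;> linarith [hr0 z, hρ z]

theorem discrepancyWeight_le [IsMarkovKernel M] (hr : Measurable r) (hr0 : ∀ z, 0 ≤ r z)
    (hρ : ∀ z, r z ≤ ρ) (x : Θ) : discrepancyWeight M r x ≤ ρ + 1 := by
  rw [discrepancyWeight_eq]
  calc ∫ z, |r z - 1| ∂(M ∘ₖ M) x ≤ ∫ _, ρ + 1 ∂(M ∘ₖ M) x :=
        integral_mono (integrable_abs_sub_one hr hr0 hρ _) (integrable_const _) fun z =>
          abs_le.2 ⟨by linarith [hr0 z, hρ z], by linarith [hρ z]⟩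
    _ = ρ + 1 := by simp

theorem Qmeas_apply_univ_le [IsMarkovKernel M] (hr : Measurable r) (hr0 : ∀ z, 0 ≤ r z)
    (hρ : ∀ z, r z ≤ ρ) (x : Θ) :
    Qmeas M r x Set.univ ≤ 1 + ENNReal.ofReal (discrepancyWeight M r x) := by
  have hQ : Qmeas M r x Set.univ = ∫⁻ z, ENNReal.ofReal (r z) ∂(M ∘ₖ M) x := by
    rw [Kernel.lintegral_comp _ _ _ hr.ennreal_ofReal]
    simpa using lintegral_Qmeas hr x (g := fun _ => 1) measurable_const
  rw [hQ, discrepancyWeight_eq, ofReal_integral_eq_lintegral_ofReal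
    (integrable_abs_sub_one hr hr0 hρ _) (ae_of_all _ fun _ => abs_nonneg _)]
  calc ∫⁻ z, ENNReal.ofReal (r z) ∂(M ∘ₖ M) x
      ≤ ∫⁻ z, (1 + ENNReal.ofReal |r z - 1|) ∂(M ∘ₖ M) x := lintegral_mono fun z => by
        rw [← ENNReal.ofReal_one, ← ENNReal.ofReal_add zero_le_one (abs_nonneg _)]
        exact ENNReal.ofReal_le_ofReal (by linarith [le_abs_self (r z - 1)])
    _ = _ := by rw [lintegral_add_left measurable_const, lintegral_const, measure_univ, one_mul]

theorem integral_integral_Qmeas_sub_sq_le [IsFiniteMeasure π] [IsMarkovKernel M]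
    (hrev : IsReversible M π) (hr : Measurable r) (hr0 : ∀ z, 0 ≤ r z) (hρ : ∀ z, r z ≤ ρ)
    {f : Θ → ℝ} (hf : Measurable f)
    (hf2 : Integrable (fun x => f x ^ 2) (π.withDensity fun z => ENNReal.ofReal (r z))) :
    ∫ x, ∫ y, (f y - f x) ^ 2 ∂Qmeas M r x ∂π.withDensity (fun z => ENNReal.ofReal (r z)) ≤
      2 * (∫ x, f x ^ 2 ∂π.withDensity (fun z => ENNReal.ofReal (r z)) +
        ∫ x, f x ^ 2 * discrepancyWeight M r x ∂π.withDensity (fun z => ENNReal.ofReal (r z))) := by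
  set ν := π.withDensity fun z => ENNReal.ofReal (r z)
  have hψ0 : ∀ x, 0 ≤ f x ^ 2 * discrepancyWeight M r x :=
    fun x => mul_nonneg (sq_nonneg _) (discrepancyWeight_nonneg x)
  have hfψ : Integrable (fun x => f x ^ 2 * discrepancyWeight M r x) ν :=
    hf2.mul_bdd (stronglyMeasurable_discrepancyWeight hr).aestronglyMeasurable
      (c := ρ + 1) (ae_of_all _ fun x => by
        rw [Real.norm_eq_abs, abs_of_nonneg (discrepancyWeight_nonneg x)]
        exact discrepancyWeight_le hr hr0 hρ x)
  have hA : 0 ≤ ∫ x, f x ^ 2 ∂ν := integral_nonneg fun _ => sq_nonneg _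
  have hB : 0 ≤ ∫ x, f x ^ 2 * discrepancyWeight M r x ∂ν := integral_nonneg hψ0
  rw [← ENNReal.ofReal_le_ofReal_iff (mul_nonneg zero_le_two (add_nonneg hA hB))]
  calc ENNReal.ofReal (∫ x, ∫ y, (f y - f x) ^ 2 ∂Qmeas M r x ∂ν)
      ≤ ∫⁻ x, ∫⁻ y, ENNReal.ofReal ((f y - f x) ^ 2) ∂Qmeas M r x ∂ν :=
        (ofReal_integral_le_lintegral_ofReal (ae_of_all _ fun _ => integral_nonneg fun _ =>
          sq_nonneg _)).trans (lintegral_mono fun _ => ofReal_integral_le_lintegral_ofReal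
            (ae_of_all _ fun _ => sq_nonneg _))
    _ ≤ 2 * ∫⁻ x, ENNReal.ofReal (f x ^ 2) * Qmeas M r x Set.univ ∂ν :=
        lintegral_lintegral_Qmeas_ofReal_sub_sq_le hrev hr hρ hf
    _ ≤ 2 * ∫⁻ x, ENNReal.ofReal (f x ^ 2) * (1 + ENNReal.ofReal (discrepancyWeight M r x)) ∂ν := by
        gcongr with x
        exact Qmeas_apply_univ_le hr hr0 hρ x
    _ = _ := by
        rw [ENNReal.ofReal_mul zero_le_two, ENNReal.ofReal_ofNat, ENNReal.ofReal_add hA hB,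
          ofReal_integral_eq_lintegral_ofReal hf2 (ae_of_all _ fun _ => sq_nonneg _),
          ofReal_integral_eq_lintegral_ofReal hfψ (ae_of_all _ hψ0),
          ← lintegral_add_left (hf.pow_const 2).ennreal_ofReal]
        simp_rw [mul_add, mul_one, ENNReal.ofReal_mul (sq_nonneg _)]

theorem integral_sq_mul_discrepancyWeight_le_discrepancy (M : Kernel Θ Θ) [IsMarkovKernel M]
    (hr : Measurable r) (hr0 : ∀ z, 0 ≤ r z) (hρ : ∀ z, r z ≤ ρ) {μ : Measure Θ} {h : Θ → ℝ}
    (hh : Measurable h) (hh2 : Integrable (fun x => h x ^ 2) μ) (hh1 : ∫ x, h x ^ 2 ∂μ = 1) :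
    ∫ x, h x ^ 2 * discrepancyWeight M r x ∂μ ≤ discrepancy μ M r := by
  refine le_csSup ⟨ρ + 1, ?_⟩ ⟨h, hh, hh2, hh1, rfl⟩
  rintro _ ⟨f, -, hf2, hf1, rfl⟩
  calc ∫ x, f x ^ 2 * discrepancyWeight M r x ∂μ ≤ ∫ x, f x ^ 2 * (ρ + 1) ∂μ :=
        integral_mono_of_nonneg (ae_of_all _ fun x => mul_nonneg (sq_nonneg _)
          (discrepancyWeight_nonneg x)) (hf2.mul_const _) (ae_of_all _ fun x =>
            mul_le_mul_of_nonneg_left (discrepancyWeight_le hr hr0 hρ x) (sq_nonneg _))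
    _ = ρ + 1 := by rw [integral_mul_const, hf1, one_mul]

theorem discrepancy_nonneg (μ : Measure Θ) (M : Kernel Θ Θ) (r : Θ → ℝ) :
    0 ≤ discrepancy μ M r :=
  Real.sSup_nonneg <| by
    rintro _ ⟨f, -, -, -, rfl⟩
    exact integral_nonneg fun x => mul_nonneg (sq_nonneg _) (discrepancyWeight_nonneg x)

theorem integral_sq_mul_discrepancyWeight_le (M : Kernel Θ Θ) [IsMarkovKernel M]
    (hr : Measurable r) (hr0 : ∀ z, 0 ≤ r z) (hρ : ∀ z, r z ≤ ρ) {μ : Measure Θ} {g : Θ → ℝ}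
    (hg : Measurable g) (hg2 : Integrable (fun x => g x ^ 2) μ) :
    ∫ x, g x ^ 2 * discrepancyWeight M r x ∂μ ≤ discrepancy μ M r * ∫ x, g x ^ 2 ∂μ := by
  set s := ∫ x, g x ^ 2 ∂μ
  rcases (integral_nonneg fun x => sq_nonneg (g x) : 0 ≤ s).eq_or_lt with hs | hs
  · have hg0 : (fun x => g x ^ 2) =ᵐ[μ] 0 :=
      (integral_eq_zero_iff_of_nonneg (fun x => sq_nonneg _) hg2).1 hs.symm
    rw [show s = 0 from hs.symm, mul_zero,
      integral_eq_zero_of_ae (hg0.mono fun x hx => by simp [hx])]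
  have hsq : ∀ x, (g x / √s) ^ 2 = g x ^ 2 / s := fun x => by rw [div_pow, Real.sq_sqrt hs.le]
  have key := integral_sq_mul_discrepancyWeight_le_discrepancy M hr hr0 hρ
    (h := fun x => g x / √s) (hg.div_const _) (by simpa only [hsq] using hg2.div_const s)
    (by simp_rw [hsq]; rw [integral_div, div_self hs.ne'])
  simp_rw [hsq, div_mul_eq_mul_div] at key
  rw [integral_div, div_le_iff₀ hs] at key
  exact key

theorem specGap_quotient_le [IsFiniteMeasure π] [IsMarkovKernel M]
    [IsProbabilityMeasure (π.withDensity fun z => ENNReal.ofReal (r z))]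
    (hrev : IsReversible M π) (hr : Measurable r) (hr0 : ∀ z, 0 ≤ r z) (hρ : ∀ z, r z ≤ ρ)
    {f : Θ → ℝ} (hf : Measurable f)
    (hf2 : Integrable (fun x => f x ^ 2) (π.withDensity fun z => ENNReal.ofReal (r z)))
    (hvar : 0 < varI (π.withDensity fun z => ENNReal.ofReal (r z)) f) :
    (∫ x, ∫ y, (f y - f x) ^ 2 ∂Qmeas M r x ∂π.withDensity (fun z => ENNReal.ofReal (r z))) /
        (∫ x, ∫ y, (f y - f x) ^ 2 ∂π.withDensity (fun z => ENNReal.ofReal (r z))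
          ∂π.withDensity (fun z => ENNReal.ofReal (r z))) ≤
      1 + discrepancy (π.withDensity fun z => ENNReal.ofReal (r z)) M r := by
  set ν := π.withDensity fun z => ENNReal.ofReal (r z)
  set c := ∫ x, f x ∂ν
  have hL2 : MemLp f 2 ν := (memLp_two_iff_integrable_sq hf.aestronglyMeasurable).2 hf2
  have hg2 : Integrable (fun x => (f x - c) ^ 2) ν := (hL2.sub (memLp_const c)).integrable_sq
  have hD : ∫ x, ∫ y, (f y - f x) ^ 2 ∂ν ∂ν = 2 * varI ν f := by
    rw [integral_integral_sub_sq hL2, probReal_univ, one_mul, varI]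
  have hvar' : ∫ x, (f x - c) ^ 2 ∂ν = varI ν f := by
    rw [integral_sub_const_sq hL2, probReal_univ, varI]
    ring
  have hN : ∫ x, ∫ y, (f y - f x) ^ 2 ∂Qmeas M r x ∂ν =
      ∫ x, ∫ y, ((f y - c) - (f x - c)) ^ 2 ∂Qmeas M r x ∂ν := by
    simp_rw [sub_sub_sub_cancel_right]
  have hgap := integral_integral_Qmeas_sub_sq_le hrev hr hr0 hρ (hf.sub_const c) hg2
  have hdisc := integral_sq_mul_discrepancyWeight_le M hr hr0 hρ (hf.sub_const c) hg2
  rw [hvar'] at hgap hdisc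
  rw [hD, div_le_iff₀ (by positivity), hN]
  linarith

end

theorem Real.sInf_le_of_forall_le {S : Set ℝ} {a : ℝ} (hS : ∀ x ∈ S, 0 ≤ x) (ha : 0 ≤ a)
    (h : ∀ x ∈ S, x ≤ a) : sInf S ≤ a := by
  rcases S.eq_empty_or_nonempty with rfl | ⟨x, hx⟩
  · rwa [Real.sInf_empty]
  · exact (csInf_le ⟨0, hS⟩ hx).trans (h x hx)

theorem specGap_le_one_add_discrepancy
    {Θ : Type*} [MeasurableSpace Θ]
    (πprev πcur : Measure Θ)
    (hπprev : IsProbabilityMeasure πprev) (hπcur : IsProbabilityMeasure πcur)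
    (M : Kernel Θ Θ) (hM : IsMarkovKernel M)
    (hrev : IsReversible M πcur)
    (r : Θ → ℝ) (hrmeas : Measurable r) (hrnonneg : ∀ z, 0 ≤ r z)
    (hdens : πprev = πcur.withDensity (fun z => ENNReal.ofReal (r z)))
    (ρ : ℝ) (hρ : ∀ z, r z ≤ ρ) :
    specGap πprev M r ≤ 1 + discrepancy πprev M r := by
  subst hdens
  refine Real.sInf_le_of_forall_le ?_ (add_nonneg zero_le_one (discrepancy_nonneg _ M r)) ?_
  · rintro _ ⟨f, -, -, -, rfl⟩
    exact div_nonneg (integral_nonneg fun _ => integral_nonneg fun _ => sq_nonneg _)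
      (integral_nonneg fun _ => integral_nonneg fun _ => sq_nonneg _)
  · rintro _ ⟨f, hf, hf2, hvar, rfl⟩
    exact specGap_quotient_le hrev hrmeas hrnonneg hρ hf hf2 hvar
end

section
/- Suppose there are constants λ̲ > 0 and A ≥ 0 such that for all 1 ≤ j ≤ L the spectral gaps satisfy λ_j ≥ λ̲ and the discrepancy coefficients satisfy α_j ≤ A/L and α_j ≤ λ̲/2 (with α_0 = 0 and λ_j ≤ 1 + α_j). Then Λ_L = Σ_{i=0}^{L} α_i ∏_{ℓ=i+1}^{L} (1 − λ_ℓ + α_ℓ) satisfies |Λ_L| ≤ 2A/(L λ̲); in particular Λ_L < 1 whenever L > 2A/λ̲. -/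
/- STATEMENT 9: If the spectral gaps satisfy `λ_j ≥ λ̲ > 0` and the discrepancy coefficients
satisfy `α_j ≤ A/L` and `α_j ≤ λ̲/2` (with `α_0 = 0`, `α_j ≥ 0`, `λ_j ≤ 1 + α_j`), then
`Λ_L = Σ_{i=0}^{L} α_i ∏_{ℓ=i+1}^{L} (1 − λ_ℓ + α_ℓ)` satisfies `|Λ_L| ≤ 2A/(Lλ̲)`;
in particular `Λ_L < 1` whenever `L > 2A/λ̲`. -/
theorem cyclical_mcmc_LambdaL_bound
    (L : ℕ) (hL : 1 ≤ L)
    (α lam : ℕ → ℝ) (lamLB A : ℝ)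
    (hlamLB : 0 < lamLB) (hA : 0 ≤ A)
    (hα0 : α 0 = 0)
    (hαnonneg : ∀ j, 0 ≤ α j)
    (hgap : ∀ j, 1 ≤ j → j ≤ L → lamLB ≤ lam j)
    (hlamUB : ∀ j, 1 ≤ j → j ≤ L → lam j ≤ 1 + α j)
    (hαA : ∀ j, 1 ≤ j → j ≤ L → α j ≤ A / L)
    (hαhalf : ∀ j, 1 ≤ j → j ≤ L → α j ≤ lamLB / 2) :
    |∑ i ∈ Finset.range (L + 1), α i * ∏ ℓ ∈ Finset.Icc (i + 1) L, (1 - lam ℓ + α ℓ)|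
        ≤ 2 * A / (L * lamLB) ∧
    (2 * A / lamLB < L →
      (∑ i ∈ Finset.range (L + 1), α i * ∏ ℓ ∈ Finset.Icc (i + 1) L, (1 - lam ℓ + α ℓ)) < 1) := by
  have hL0 : (0:ℝ) < L := by exact_mod_cast hL
  set r : ℝ := 1 - lamLB / 2 with hr
  have hlam2 : lamLB ≤ 2 := by
    have h1 := hgap 1 le_rfl hL
    have h2 := hlamUB 1 le_rfl hL
    have h3 := hαhalf 1 le_rfl hL
    linarith
  have hr0 : 0 ≤ r := by simp only [hr]; linarith
  have hr1 : r < 1 := by simp only [hr]; linarith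
  have hfac : ∀ i, ∀ ℓ ∈ Finset.Icc (i+1) L, 0 ≤ 1 - lam ℓ + α ℓ := by
    intro i ℓ hℓ
    simp only [Finset.mem_Icc] at hℓ
    have := hlamUB ℓ (le_trans (Nat.succ_le_succ (Nat.zero_le i)) hℓ.1) hℓ.2
    linarith
  have hfacub : ∀ i, ∀ ℓ ∈ Finset.Icc (i+1) L, 1 - lam ℓ + α ℓ ≤ r := by
    intro i ℓ hℓ
    simp only [Finset.mem_Icc] at hℓ
    have h1 : 1 ≤ ℓ := le_trans (Nat.succ_le_succ (Nat.zero_le i)) hℓ.1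
    have := hgap ℓ h1 hℓ.2
    have := hαhalf ℓ h1 hℓ.2
    simp only [hr]; linarith
  have hprodnn : ∀ i, 0 ≤ ∏ ℓ ∈ Finset.Icc (i + 1) L, (1 - lam ℓ + α ℓ) := fun i =>
    Finset.prod_nonneg (hfac i)
  have hsumnn : 0 ≤ ∑ i ∈ Finset.range (L + 1), α i * ∏ ℓ ∈ Finset.Icc (i + 1) L, (1 - lam ℓ + α ℓ) :=
    Finset.sum_nonneg fun i _ => mul_nonneg (hαnonneg i) (hprodnn i)
  have hAL : 0 ≤ A / L := div_nonneg hA hL0.le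
  have hterm : ∀ i ∈ Finset.range (L + 1),
      α i * ∏ ℓ ∈ Finset.Icc (i + 1) L, (1 - lam ℓ + α ℓ) ≤ (A / L) * r ^ (L - i) := by
    intro i hi
    simp only [Finset.mem_range] at hi
    have hiL : i ≤ L := Nat.lt_succ_iff.mp hi
    have hprod : ∏ ℓ ∈ Finset.Icc (i + 1) L, (1 - lam ℓ + α ℓ) ≤ r ^ (L - i) := by
      have hcard : (Finset.Icc (i+1) L).card = L - i := by
        rw [Nat.card_Icc]; omega
      calc ∏ ℓ ∈ Finset.Icc (i + 1) L, (1 - lam ℓ + α ℓ)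
          ≤ ∏ ℓ ∈ Finset.Icc (i + 1) L, r :=
            Finset.prod_le_prod (hfac i) (hfacub i)
        _ = r ^ (L - i) := by rw [Finset.prod_const, hcard]
    rcases Nat.eq_zero_or_pos i with h0 | hpos
    · subst h0; rw [hα0, zero_mul]
      exact mul_nonneg hAL (pow_nonneg hr0 _)
    · exact mul_le_mul (hαA i hpos hiL) hprod (hprodnn i) hAL
  have hgeom : ∑ i ∈ Finset.range (L + 1), r ^ i ≤ 1 / (1 - r) := by
    have h1r : (0:ℝ) < 1 - r := by linarith
    have hrn : 0 ≤ r ^ (L + 1) := pow_nonneg hr0 _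
    rw [geom_sum_eq (ne_of_lt hr1) (L + 1)]
    have heq : (r ^ (L + 1) - 1) / (r - 1) = (1 - r ^ (L + 1)) / (1 - r) := by
      rw [← neg_div_neg_eq, neg_sub, neg_sub]
    rw [heq]
    gcongr
    linarith
  have hsum : ∑ i ∈ Finset.range (L + 1), α i * ∏ ℓ ∈ Finset.Icc (i + 1) L, (1 - lam ℓ + α ℓ)
      ≤ 2 * A / (L * lamLB) := by
    calc ∑ i ∈ Finset.range (L + 1), α i * ∏ ℓ ∈ Finset.Icc (i + 1) L, (1 - lam ℓ + α ℓ)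
        ≤ ∑ i ∈ Finset.range (L + 1), (A / L) * r ^ (L - i) := Finset.sum_le_sum hterm
      _ = (A / L) * ∑ i ∈ Finset.range (L + 1), r ^ (L - i) := by rw [Finset.mul_sum]
      _ = (A / L) * ∑ i ∈ Finset.range (L + 1), r ^ i := by
          congr 1
          rw [← Finset.sum_range_reflect]
          apply Finset.sum_congr rfl
          intro i hi
          simp only [Finset.mem_range] at hi
          congr 1
          omega
      _ ≤ (A / L) * (1 / (1 - r)) := by
          apply mul_le_mul_of_nonneg_left hgeom hAL
      _ = 2 * A / (L * lamLB) := by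
          have : 1 - r = lamLB / 2 := by simp [hr]
          rw [this]
          field_simp
  constructor
  · rw [abs_of_nonneg hsumnn]; exact hsum
  · intro hLbig
    have hbound : 2 * A / (L * lamLB) < 1 := by
      rw [div_lt_one (by positivity)]
      rw [div_lt_iff₀ hlamLB] at hLbig
      linarith [hLbig]
    linarith
end

section
/- Let P be a Markov kernel on a measurable space and ν a probability measure (not necessarily invariant under P) such that ‖P(x,·) − ν‖_tv ≤ ρ for all x, for some ρ ∈ (0,1). Then P satisfies a Doeblin condition and therefore admits an invariant probability measure π with ‖π − ν‖_tv ≤ ρ; moreover, there exists κ ∈ (0,1) such that for all k ≥ 1 and all x, ‖P^k(x,·) − ν‖_tv ≤ κ^k + ρ. -/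
/-!
Since `‖P(x,·) - ν‖_tv ≤ ρ` for every `x`, any two rows of `P` are within `2ρ` of each other, so
by Dobrushin's argument `μ ↦ μP` contracts the total variation distance by the factor `ρ < 1`.
The orbit `δ_x P^n` is therefore Cauchy; its limit is a uniform setwise limit of probability
measures, hence a probability measure, and it is invariant. Both bounds then come from convexity:
`‖μP - ν‖_tv ≤ ρ` for every probability measure `μ`, in particular for `π = πP` and for
`P^k(x,·) = P^(k-1)(x,·) P`.
-/

open MeasureTheory ProbabilityTheory

/-- Total variation distance `‖μ − ν‖_tv = sup_{f : |f| ≤ 1} |μ(f) − ν(f)|`. -/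
noncomputable def tvDist {Θ : Type*} [MeasurableSpace Θ] (μ ν : Measure Θ) : ℝ :=
  sSup {r : ℝ | ∃ f : Θ → ℝ, Measurable f ∧ (∀ x, |f x| ≤ 1) ∧
    r = |(∫ x, f x ∂μ) - ∫ x, f x ∂ν|}

/-- The `k`-fold iterate `P^k(x, ·)` of a Markov kernel. -/
noncomputable def kernelIter {Θ : Type*} [MeasurableSpace Θ] (P : Kernel Θ Θ) :
    ℕ → Θ → Measure Θ
  | 0, x => Measure.dirac x
  | n + 1, x => (kernelIter P n x).bind (fun y => P y)

open Filter Topology Set Function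

section TotalVariation

variable {α : Type*} [MeasurableSpace α] {μ ν η : Measure α} {f : α → ℝ} {C c ε : ℝ}

lemma integrable_of_abs_le [IsFiniteMeasure μ] (hf : Measurable f) (hC : ∀ x, |f x| ≤ C) :
    Integrable f μ :=
  .of_bound hf.aestronglyMeasurable C (.of_forall fun x => (Real.norm_eq_abs _).trans_le (hC x))

lemma abs_integral_le_of_abs_le [IsProbabilityMeasure μ] (hC : ∀ x, |f x| ≤ C) :
    |∫ x, f x ∂μ| ≤ C := by
  simpa using norm_integral_le_of_norm_le_const (μ := μ)
    (.of_forall fun x => (Real.norm_eq_abs (f x)).trans_le (hC x))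

lemma integral_sub_const [IsProbabilityMeasure μ] (hf : Integrable f μ) (c : ℝ) :
    ∫ x, (f x - c) ∂μ = ∫ x, f x ∂μ - c := by
  simp [integral_sub hf (integrable_const c)]

lemma tvDist_nonneg (μ ν : Measure α) : 0 ≤ tvDist μ ν :=
  Real.sSup_nonneg fun _ ⟨_, _, _, hr⟩ => hr ▸ abs_nonneg _

lemma tvDist_comm (μ ν : Measure α) : tvDist μ ν = tvDist ν μ := by
  simp only [tvDist, abs_sub_comm]

lemma tvDist_le_of_forall (hc : 0 ≤ c) (h : ∀ f : α → ℝ, Measurable f → (∀ x, |f x| ≤ 1) →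
    |(∫ x, f x ∂μ) - ∫ x, f x ∂ν| ≤ c) : tvDist μ ν ≤ c :=
  Real.sSup_le (fun _ ⟨f, hf, hf1, hr⟩ => hr ▸ h f hf hf1) hc

variable [IsProbabilityMeasure μ] [IsProbabilityMeasure ν]

lemma abs_integral_sub_integral_le_tvDist (hf : Measurable f) (hf1 : ∀ x, |f x| ≤ 1) :
    |(∫ x, f x ∂μ) - ∫ x, f x ∂ν| ≤ tvDist μ ν := by
  refine le_csSup ⟨2, ?_⟩ ⟨f, hf, hf1, rfl⟩
  rintro _ ⟨g, -, hg1, rfl⟩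
  linarith [abs_sub (∫ x, g x ∂μ) (∫ x, g x ∂ν), abs_integral_le_of_abs_le (μ := μ) hg1,
    abs_integral_le_of_abs_le (μ := ν) hg1]

lemma tvDist_le_two : tvDist μ ν ≤ 2 :=
  tvDist_le_of_forall zero_le_two fun f _ hf1 => by
    linarith [abs_sub (∫ x, f x ∂μ) (∫ x, f x ∂ν), abs_integral_le_of_abs_le (μ := μ) hf1,
      abs_integral_le_of_abs_le (μ := ν) hf1]

lemma tvDist_triangle [IsProbabilityMeasure η] : tvDist μ η ≤ tvDist μ ν + tvDist ν η :=
  tvDist_le_of_forall (add_nonneg (tvDist_nonneg _ _) (tvDist_nonneg _ _)) fun f hf hf1 => by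
    linarith [abs_sub_le (∫ x, f x ∂μ) (∫ x, f x ∂ν) (∫ x, f x ∂η),
      abs_integral_sub_integral_le_tvDist (μ := μ) (ν := ν) hf hf1,
      abs_integral_sub_integral_le_tvDist (μ := ν) (ν := η) hf hf1]

lemma abs_integral_sub_integral_le_mul_tvDist (hf : Measurable f) (hC : ∀ x, |f x| ≤ C) :
    |(∫ x, f x ∂μ) - ∫ x, f x ∂ν| ≤ C * tvDist μ ν := by
  obtain ⟨x₀⟩ := nonempty_of_isProbabilityMeasure μ
  rcases (abs_nonneg _).trans (hC x₀) |>.eq_or_lt with rfl | hC0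
  · simp [show f = 0 from funext fun x => abs_nonpos_iff.mp (hC x)]
  have key := abs_integral_sub_integral_le_tvDist (μ := μ) (ν := ν) (hf.div_const C)
    fun x => by rw [abs_div, abs_of_pos hC0, div_le_one hC0]; exact hC x
  rw [integral_div, integral_div, ← sub_div, abs_div, abs_of_pos hC0, div_le_iff₀ hC0] at key
  linarith

lemma abs_integral_sub_integral_le_half_mul_tvDist (hf : Measurable f)
    (hosc : ∀ x y, |f x - f y| ≤ c) :
    |(∫ x, f x ∂μ) - ∫ x, f x ∂ν| ≤ c / 2 * tvDist μ ν := by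
  have := nonempty_of_isProbabilityMeasure μ
  let x₀ : α := Classical.arbitrary α
  have hbdd : BddBelow (range f) := ⟨f x₀ - c, by
    rintro _ ⟨x, rfl⟩; linarith [(abs_le.mp (hosc x₀ x)).2]⟩
  set a := ⨅ x, f x
  have hlow : ∀ x, a ≤ f x := ciInf_le hbdd
  have hup : ∀ x, f x ≤ a + c := fun x => by
    have : f x - c ≤ a := le_ciInf fun y => by linarith [(abs_le.mp (hosc x y)).2]
    linarith
  have hcentered : ∀ x, |f x - (a + c / 2)| ≤ c / 2 := fun x =>
    abs_le.mpr ⟨by linarith [hlow x], by linarith [hup x]⟩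
  have hint : ∀ x, |f x| ≤ |f x₀| + c := fun x => by
    linarith [abs_sub_abs_le_abs_sub (f x) (f x₀), hosc x x₀]
  have key := abs_integral_sub_integral_le_mul_tvDist (μ := μ) (ν := ν)
    (f := fun x => f x - (a + c / 2)) (hf.sub_const _) hcentered
  rwa [integral_sub_const (integrable_of_abs_le hf hint),
    integral_sub_const (integrable_of_abs_le hf hint), sub_sub_sub_cancel_right] at key

lemma abs_measureReal_sub_le_half_tvDist {A : Set α} (hA : MeasurableSet A) :
    |μ.real A - ν.real A| ≤ tvDist μ ν / 2 := by
  have hosc : ∀ x y, |A.indicator (1 : α → ℝ) x - A.indicator 1 y| ≤ 1 := fun x y => by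
    by_cases hx : x ∈ A <;> by_cases hy : y ∈ A <;> simp [hx, hy]
  have key := abs_integral_sub_integral_le_half_mul_tvDist (μ := μ) (ν := ν)
    (f := A.indicator 1) (measurable_const.indicator hA) hosc
  rwa [integral_indicator_one hA, integral_indicator_one hA, div_mul_eq_mul_div, one_mul] at key

lemma eq_of_tvDist_eq_zero (h : tvDist μ ν = 0) : μ = ν := by
  ext A hA
  have := abs_measureReal_sub_le_half_tvDist (μ := μ) (ν := ν) hA
  rw [h, zero_div, abs_nonpos_iff, sub_eq_zero, measureReal_def, measureReal_def,
    ENNReal.toReal_eq_toReal_iff' (measure_ne_top _ _) (measure_ne_top _ _)] at this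
  exact this

lemma abs_integral_sub_integral_le_mul_of_abs_measureReal_sub_le
    (h : ∀ A, MeasurableSet A → |μ.real A - ν.real A| ≤ ε) {M : ℝ} (hM : 0 ≤ M)
    (hf : Measurable f) (hf0 : ∀ x, 0 ≤ f x) (hfM : ∀ x, f x ≤ M) :
    |(∫ x, f x ∂μ) - ∫ x, f x ∂ν| ≤ M * ε := by
  have hlayer : ∀ (τ : Measure α) [IsProbabilityMeasure τ],
      ∫ x, f x ∂τ = ∫ t in Ioc 0 M, τ.real {x | t ≤ f x} := fun τ _ =>
    (integrable_of_abs_le hf fun x => abs_le.mpr ⟨by linarith [hf0 x], hfM x⟩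
      ).integral_eq_integral_Ioc_meas_le (.of_forall hf0) (.of_forall hfM)
  have hint : ∀ (τ : Measure α) [IsProbabilityMeasure τ],
      IntegrableOn (fun t => τ.real {x | t ≤ f x}) (Ioc 0 M) := by
    intro τ _
    have hanti : Antitone fun t => τ.real {x | t ≤ f x} := fun s t hst =>
      measureReal_mono fun x (hx : t ≤ f x) => hst.trans hx
    refine Measure.integrableOn_of_bounded (M := 1) measure_Ioc_lt_top.ne
      hanti.measurable.aestronglyMeasurable (.of_forall fun t => ?_)
    rw [Real.norm_eq_abs, abs_of_nonneg measureReal_nonneg]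
    exact measureReal_le_one
  rw [hlayer μ, hlayer ν, ← integral_sub (hint μ) (hint ν), ← Real.norm_eq_abs]
  calc _ ≤ ε * volume.real (Ioc 0 M) := norm_setIntegral_le_of_norm_le_const measure_Ioc_lt_top
          fun t _ => h _ (measurableSet_le measurable_const hf)
    _ = M * ε := by rw [Real.volume_real_Ioc_of_le hM, sub_zero, mul_comm]

lemma tvDist_le_two_mul_of_abs_measureReal_sub_le
    (h : ∀ A, MeasurableSet A → |μ.real A - ν.real A| ≤ ε) : tvDist μ ν ≤ 2 * ε := by
  have hε : 0 ≤ ε := by simpa using h ∅ .empty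
  refine tvDist_le_of_forall (by linarith) fun f hf hf1 => ?_
  have hshift := abs_integral_sub_integral_le_mul_of_abs_measureReal_sub_le h zero_le_two
    (f := fun x => f x + 1) (hf.add_const 1) (fun x => by linarith [(abs_le.mp (hf1 x)).1])
    (fun x => by linarith [(abs_le.mp (hf1 x)).2])
  have hfi : ∀ (τ : Measure α) [IsProbabilityMeasure τ], Integrable f τ :=
    fun τ _ => integrable_of_abs_le hf hf1
  rwa [integral_add (hfi μ) (integrable_const 1), integral_add (hfi ν) (integrable_const 1),
    integral_const, integral_const, probReal_univ, probReal_univ,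
    add_sub_add_right_eq_sub] at hshift

end TotalVariation

section UniformLimit

variable {α : Type*} [MeasurableSpace α]

lemma hasSum_measureReal_iUnion (μ : Measure α) [IsFiniteMeasure μ] {s : ℕ → Set α}
    (hs : ∀ i, MeasurableSet (s i)) (hd : Pairwise (Disjoint on s)) :
    HasSum (fun i => μ.real (s i)) (μ.real (⋃ i, s i)) := by
  have hfin : ∑' i, μ (s i) ≠ ⊤ := measure_iUnion hd hs ▸ measure_ne_top μ _
  rw [measureReal_def, measure_iUnion hd hs, ENNReal.tsum_toReal_eq fun i => measure_ne_top μ _]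
  exact (ENNReal.summable_toReal hfin).hasSum

section

variable {μ : ℕ → Measure α} {F : Set α → ℝ} {δ : ℕ → ℝ}

lemma tendsto_measureReal_of_abs_sub_le (hδ : Tendsto δ atTop (𝓝 0))
    (hF : ∀ n A, MeasurableSet A → |(μ n).real A - F A| ≤ δ n) ⦃A : Set α⦄
    (hA : MeasurableSet A) : Tendsto (fun n => (μ n).real A) atTop (𝓝 (F A)) :=
  tendsto_iff_dist_tendsto_zero.mpr (squeeze_zero (fun _ => dist_nonneg) (fun n => hF n A hA) hδ)

variable [∀ n, IsProbabilityMeasure (μ n)]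

/-- σ-additivity passes to the uniform limit by the Moore–Osgood theorem. -/
lemma hasSum_of_abs_measureReal_sub_le (hδ : Tendsto δ atTop (𝓝 0))
    (hF : ∀ n A, MeasurableSet A → |(μ n).real A - F A| ≤ δ n) ⦃s : ℕ → Set α⦄
    (hs : ∀ i, MeasurableSet (s i)) (hd : Pairwise (Disjoint on s)) :
    HasSum (fun i => F (s i)) (F (⋃ i, s i)) := by
  have hlim := tendsto_measureReal_of_abs_sub_le hδ hF
  have hfin : ∀ N, MeasurableSet (⋃ i ∈ Finset.range N, s i) :=
    fun N => .biUnion (Finset.range N).countable_toSet fun i _ => hs i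
  have hpart : ∀ n N, (μ n).real (⋃ i ∈ Finset.range N, s i)
      = ∑ i ∈ Finset.range N, (μ n).real (s i) :=
    fun n N => measureReal_biUnion_finset (hd.set_pairwise _) fun i _ => hs i
  have hadd : ∀ N, F (⋃ i ∈ Finset.range N, s i) = ∑ i ∈ Finset.range N, F (s i) :=
    fun N => tendsto_nhds_unique (hlim (hfin N)) <| by
      simpa only [hpart] using tendsto_finsetSum _ fun i _ => hlim (hs i)
  have hunif : TendstoUniformly (fun n N => (μ n).real (⋃ i ∈ Finset.range N, s i))
      (fun N => F (⋃ i ∈ Finset.range N, s i)) atTop := by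
    refine Metric.tendstoUniformly_iff.mpr fun ε hε => ?_
    filter_upwards [hδ.eventually (gt_mem_nhds hε)] with n hn N
    rw [Real.dist_eq, abs_sub_comm]
    exact (hF n _ (hfin N)).trans_lt hn
  rw [hasSum_iff_tendsto_nat_of_nonneg
    (fun i => ge_of_tendsto' (hlim (hs i)) fun _ => measureReal_nonneg)]
  simp_rw [← hadd]
  refine hunif.tendsto_of_eventually_tendsto (.of_forall fun n => ?_) (hlim (.iUnion hs))
  simpa only [hpart] using (hasSum_measureReal_iUnion (μ n) hs hd).tendsto_sum_nat

lemma exists_isProbabilityMeasure_of_abs_measureReal_sub_le (hδ : Tendsto δ atTop (𝓝 0))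
    (hF : ∀ n A, MeasurableSet A → |(μ n).real A - F A| ≤ δ n) :
    ∃ π : Measure α, IsProbabilityMeasure π ∧ ∀ A, MeasurableSet A → π.real A = F A := by
  have hlim := tendsto_measureReal_of_abs_sub_le hδ hF
  have hF0 : ∀ A, MeasurableSet A → 0 ≤ F A := fun A hA =>
    ge_of_tendsto' (hlim hA) fun _ => measureReal_nonneg
  have hσ := hasSum_of_abs_measureReal_sub_le hδ hF
  let π := Measure.ofMeasurable (fun A _ => ENNReal.ofReal (F A))
    (by simpa using le_of_tendsto' (hlim .empty) fun n => (measureReal_empty (μ := μ n)).le)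
    fun s hs hd => by
      rw [← ENNReal.ofReal_tsum_of_nonneg (fun i => hF0 _ (hs i)) (hσ hs hd).summable,
        (hσ hs hd).tsum_eq]
  have hπ : ∀ A, MeasurableSet A → π.real A = F A := fun A hA => by
    rw [measureReal_def, Measure.ofMeasurable_apply A hA, ENNReal.toReal_ofReal (hF0 A hA)]
  refine ⟨π, ⟨?_⟩, hπ⟩
  have hone : Tendsto (fun n => (μ n).real univ) atTop (𝓝 1) := by simp
  rw [Measure.ofMeasurable_apply _ .univ, tendsto_nhds_unique (hlim .univ) hone,
    ENNReal.ofReal_one]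

end

lemma exists_isProbabilityMeasure_tvDist_le (μ : ℕ → Measure α)
    [∀ n, IsProbabilityMeasure (μ n)] {ε : ℕ → ℝ} (hε : Tendsto ε atTop (𝓝 0))
    (hcauchy : ∀ n m, n ≤ m → tvDist (μ n) (μ m) ≤ ε n) :
    ∃ π : Measure α, IsProbabilityMeasure π ∧ ∀ n, tvDist (μ n) π ≤ ε n := by
  have hsetwise : ∀ n m A, n ≤ m → MeasurableSet A → |(μ n).real A - (μ m).real A| ≤ ε n / 2 :=
    fun n m A hnm hA =>
      (abs_measureReal_sub_le_half_tvDist hA).trans (by linarith [hcauchy n m hnm])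
  set F : Set α → ℝ := fun A => limUnder atTop fun n => (μ n).real A
  have hlim : ∀ A, MeasurableSet A → Tendsto (fun n => (μ n).real A) atTop (𝓝 (F A)) :=
    fun A hA => (cauchySeq_of_le_tendsto_0 ε (fun n m N hn hm => by
      rw [Real.dist_eq]
      linarith [abs_sub_le ((μ n).real A) ((μ N).real A) ((μ m).real A),
        abs_sub_comm ((μ n).real A) ((μ N).real A), hsetwise N n A hn hA, hsetwise N m A hm hA])
      hε).tendsto_limUnder
  have hF : ∀ n A, MeasurableSet A → |(μ n).real A - F A| ≤ ε n / 2 := fun n A hA =>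
    le_of_tendsto ((tendsto_const_nhds.sub (hlim A hA)).abs)
      ((eventually_ge_atTop n).mono fun m hm => hsetwise n m A hm hA)
  obtain ⟨π, hπ, hπF⟩ :=
    exists_isProbabilityMeasure_of_abs_measureReal_sub_le (by simpa using hε.div_const 2) hF
  refine ⟨π, hπ, fun n => ?_⟩
  have := tvDist_le_two_mul_of_abs_measureReal_sub_le (μ := μ n) (ν := π)
    fun A hA => hπF A hA ▸ hF n A hA
  linarith

end UniformLimit

section Bind

variable {α β : Type*} [MeasurableSpace α] [MeasurableSpace β] (κ : Kernel α β)

lemma measurable_integral_kernel {f : β → ℝ} (hf : Measurable f) :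
    Measurable fun x => ∫ y, f y ∂(κ x) :=
  (hf.stronglyMeasurable.integral_kernel (κ := κ)).measurable

variable [IsMarkovKernel κ] {μ μ' : Measure α} [IsProbabilityMeasure μ] [IsProbabilityMeasure μ']
  {ν : Measure β} [IsProbabilityMeasure ν] {ρ : ℝ}

lemma integral_bind_of_abs_le {f : β → ℝ} {C : ℝ} (hf : Measurable f) (hC : ∀ y, |f y| ≤ C) :
    ∫ y, f y ∂(μ.bind κ) = ∫ x, ∫ y, f y ∂(κ x) ∂μ := by
  rw [Measure.comp_eq_comp_const_apply, Kernel.integral_comp]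
  · rfl
  · rw [← Measure.comp_eq_comp_const_apply]; exact integrable_of_abs_le hf hC

lemma tvDist_bind_le (hκ : ∀ x, tvDist (κ x) ν ≤ ρ) : tvDist (μ.bind κ) ν ≤ ρ := by
  obtain ⟨x₀⟩ := nonempty_of_isProbabilityMeasure μ
  refine tvDist_le_of_forall ((tvDist_nonneg _ _).trans (hκ x₀)) fun f hf hf1 => ?_
  rw [integral_bind_of_abs_le κ hf hf1, ← integral_sub_const
    (integrable_of_abs_le (measurable_integral_kernel κ hf) fun x => abs_integral_le_of_abs_le hf1)]
  exact abs_integral_le_of_abs_le fun x =>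
    (abs_integral_sub_integral_le_tvDist hf hf1).trans (hκ x)

lemma tvDist_bind_bind_le (hκ : ∀ x y, tvDist (κ x) (κ y) ≤ 2 * ρ) :
    tvDist (μ.bind κ) (μ'.bind κ) ≤ ρ * tvDist μ μ' := by
  obtain ⟨x₀⟩ := nonempty_of_isProbabilityMeasure μ
  have hρ : 0 ≤ ρ := by linarith [tvDist_nonneg (κ x₀) (κ x₀), hκ x₀ x₀]
  refine tvDist_le_of_forall (mul_nonneg hρ (tvDist_nonneg _ _)) fun f hf hf1 => ?_
  rw [integral_bind_of_abs_le κ hf hf1, integral_bind_of_abs_le κ hf hf1]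
  have := abs_integral_sub_integral_le_half_mul_tvDist (μ := μ) (ν := μ')
    (measurable_integral_kernel κ hf) fun x y =>
      (abs_integral_sub_integral_le_tvDist hf hf1).trans (hκ x y)
  rwa [mul_div_cancel_left₀ ρ two_ne_zero] at this

end Bind

section Dobrushin

variable {α : Type*} [MeasurableSpace α] (P : Kernel α α) [IsMarkovKernel P]

instance isProbabilityMeasure_iterate_bind (μ : Measure α) [IsProbabilityMeasure μ] (n : ℕ) :
    IsProbabilityMeasure ((·.bind P)^[n] μ) := by
  induction n with
  | zero => assumption
  | succ n ih => rw [iterate_succ_apply']; infer_instance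

lemma tvDist_iterate_bind_le {ρ : ℝ} (hρ : 0 ≤ ρ) (hP : ∀ x y, tvDist (P x) (P y) ≤ 2 * ρ)
    (μ μ' : Measure α) [IsProbabilityMeasure μ] [IsProbabilityMeasure μ'] (n : ℕ) :
    tvDist ((·.bind P)^[n] μ) ((·.bind P)^[n] μ') ≤ ρ ^ n * tvDist μ μ' := by
  induction n with
  | zero => simp
  | succ n ih =>
    rw [iterate_succ_apply', iterate_succ_apply', pow_succ', mul_assoc]
    exact (tvDist_bind_bind_le P hP).trans (mul_le_mul_of_nonneg_left ih hρ)

theorem exists_bind_eq_self_of_tvDist_le [Nonempty α] {ρ : ℝ} (hρ0 : 0 ≤ ρ) (hρ1 : ρ < 1)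
    (hP : ∀ x y, tvDist (P x) (P y) ≤ 2 * ρ) :
    ∃ π : Measure α, IsProbabilityMeasure π ∧ π.bind P = π := by
  set μ : ℕ → Measure α := fun n => (·.bind P)^[n] (Measure.dirac (Classical.arbitrary α))
  have hgeom : Tendsto (fun n => 2 * ρ ^ n) atTop (𝓝 0) := by
    simpa using (tendsto_pow_atTop_nhds_zero_of_lt_one hρ0 hρ1).const_mul 2
  obtain ⟨π, hπ, hμπ⟩ := exists_isProbabilityMeasure_tvDist_le μ hgeom fun n m hnm => by
    obtain ⟨k, rfl⟩ := Nat.exists_eq_add_of_le hnm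
    calc tvDist (μ n) (μ (n + k)) ≤ ρ ^ n * tvDist (μ 0) (μ k) := by
          rw [show μ (n + k) = (·.bind P)^[n] (μ k) from iterate_add_apply _ _ _ _]
          exact tvDist_iterate_bind_le P hρ0 hP (μ 0) (μ k) n
      _ ≤ 2 * ρ ^ n := by nlinarith [tvDist_le_two (μ := μ 0) (ν := μ k), pow_nonneg hρ0 n]
  refine ⟨π, hπ, eq_of_tvDist_eq_zero (le_antisymm ?_ (tvDist_nonneg _ _))⟩
  refine ge_of_tendsto' (by simpa using hgeom.const_mul 2) fun n => ?_
  have hstep : tvDist (π.bind P) ((μ n).bind P) ≤ ρ * tvDist (μ n) π :=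
    tvDist_comm π (μ n) ▸ tvDist_bind_bind_le P hP
  have hnext : tvDist ((μ n).bind P) π ≤ 2 * ρ ^ (n + 1) := by
    simpa only [μ, iterate_succ_apply'] using hμπ (n + 1)
  calc tvDist (π.bind P) π ≤ tvDist (π.bind P) ((μ n).bind P) + tvDist ((μ n).bind P) π :=
        tvDist_triangle
    _ ≤ ρ * (2 * ρ ^ n) + 2 * ρ ^ (n + 1) :=
        add_le_add (hstep.trans (mul_le_mul_of_nonneg_left (hμπ n) hρ0)) hnext
    _ ≤ 2 * (2 * ρ ^ n) := by nlinarith [pow_nonneg hρ0 n, pow_succ' ρ n]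

end Dobrushin

instance isProbabilityMeasure_kernelIter {Θ : Type*} [MeasurableSpace Θ] (P : Kernel Θ Θ)
    [IsMarkovKernel P] (n : ℕ) (x : Θ) : IsProbabilityMeasure (kernelIter P n x) := by
  induction n with
  | zero => exact Measure.dirac.isProbabilityMeasure
  | succ n ih => exact inferInstanceAs (IsProbabilityMeasure ((kernelIter P n x).bind P))

theorem doeblin_cyclical
    {Θ : Type*} [MeasurableSpace Θ]
    (P : Kernel Θ Θ) (hP : IsMarkovKernel P)
    (ν : Measure Θ) (hν : IsProbabilityMeasure ν)
    (ρ : ℝ) (hρ0 : 0 < ρ) (hρ1 : ρ < 1)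
    (hclose : ∀ x, tvDist (P x) ν ≤ ρ) :
    (∃ π : Measure Θ, IsProbabilityMeasure π ∧ π.bind (fun x => P x) = π ∧ tvDist π ν ≤ ρ) ∧
    (∃ κ : ℝ, 0 < κ ∧ κ < 1 ∧ ∀ k : ℕ, 1 ≤ k → ∀ x : Θ,
      tvDist (kernelIter P k x) ν ≤ κ ^ k + ρ) := by
  have : Nonempty Θ := nonempty_of_isProbabilityMeasure ν
  have hrows : ∀ x y, tvDist (P x) (P y) ≤ 2 * ρ := fun x y => by
    linarith [tvDist_triangle (μ := P x) (ν := ν) (η := P y), tvDist_comm ν (P y), hclose x,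
      hclose y]
  obtain ⟨π, hπ, hinv⟩ := exists_bind_eq_self_of_tvDist_le P hρ0.le hρ1 hrows
  refine ⟨⟨π, hπ, hinv, hinv ▸ tvDist_bind_le P hclose⟩, ρ, hρ0, hρ1, fun k hk x => ?_⟩
  obtain ⟨m, rfl⟩ := Nat.exists_eq_add_of_le' hk
  calc tvDist (kernelIter P (m + 1) x) ν ≤ ρ := tvDist_bind_le P hclose
    _ ≤ ρ ^ (m + 1) + ρ := le_add_of_nonneg_left (pow_pos hρ0 _).le
end

section
/- Let Π_{j-1}(θ) = e^{-β_{j-1}E(θ)}/Z_{j-1} and Π_j(θ) = e^{-β_j E(θ)}/Z_j on a bounded Θ with osc(E) < ∞. Then for every z ∈ Θ, |Π_{j-1}(z)/Π_j(z) − 1| ≤ |β_j − β_{j-1}| · osc(E) · exp(|β_j − β_{j-1}| · osc(E)). -/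
open MeasureTheory Real

/-!
Writing `δ = β_j - β_{j-1}`, the ratio `Π_{j-1}(z) / Π_j(z)` equals
`e^{δ E(z)} Z(β_j) / Z(β_{j-1}) = ∫ e^{δ (E(z) - E(θ))} dΠ_{j-1}(θ)`,
so its distance to `1` is an average, against the probability density `Π_{j-1}`, of
`e^{δ (E(z) - E(θ))} - 1`. Since `|δ (E(z) - E(θ))| ≤ |δ| osc(E) =: M` on `Θ`, and
`|e^t - 1| ≤ |t| e^{|t|}`, that integrand is bounded by `M e^M`.
-/

lemma abs_exp_sub_one_le_mul_exp_abs (t : ℝ) : |exp t - 1| ≤ |t| * exp |t| := by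
  have h_tangent : exp |t| - 1 ≤ |t| * exp |t| := by
    have h := mul_le_mul_of_nonneg_left (by linarith [add_one_le_exp (-|t|)] : 1 - |t| ≤ exp (-|t|))
      (exp_pos |t|).le
    rw [← exp_add, add_neg_cancel, exp_zero] at h
    linarith
  rw [abs_sub_le_iff]
  constructor
  · linarith [exp_le_exp.2 (le_abs_self t)]
  · nlinarith [add_one_le_exp t, neg_le_abs t, one_le_exp (abs_nonneg t), abs_nonneg t]

section Gibbs

variable {α : Type*} [MeasurableSpace α]

noncomputable def partitionFunction (μ : Measure α) (E : α → ℝ) (b : ℝ) : ℝ :=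
  ∫ θ, exp (-(b * E θ)) ∂μ

variable {μ : Measure α} {E : α → ℝ} {a b : ℝ}

lemma integrable_exp_of_ae_le [IsFiniteMeasure μ] {f : α → ℝ} {C : ℝ} (hf : AEMeasurable f μ)
    (hC : ∀ᵐ x ∂μ, f x ≤ C) : Integrable (fun x ↦ exp (f x)) μ :=
  .of_bound hf.exp.aestronglyMeasurable (exp C) <| hC.mono fun x hx ↦ by
    rw [norm_of_nonneg (exp_pos _).le]
    exact exp_le_exp.2 hx

lemma integrable_exp_neg_mul_of_abs_sub_le [IsFiniteMeasure μ] (hE : AEMeasurable E μ) {z : α}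
    {c : ℝ} (hosc : ∀ᵐ θ ∂μ, |E θ - E z| ≤ c) (b : ℝ) :
    Integrable (fun θ ↦ exp (-(b * E θ))) μ :=
  integrable_exp_of_ae_le (hE.const_mul b).neg (C := -(b * E z) + |b| * c) <|
    hosc.mono fun θ hθ ↦ by
      nlinarith [neg_abs_le (b * (E θ - E z)), abs_mul b (E θ - E z),
        mul_le_mul_of_nonneg_left hθ (abs_nonneg b)]

lemma integral_mul_exp_neg_mul_eq (ha : Integrable (fun θ ↦ exp (-(a * E θ))) μ)
    (hb : Integrable (fun θ ↦ exp (-(b * E θ))) μ) (z : α) :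
    ∫ θ, (exp ((b - a) * (E z - E θ)) - 1) * exp (-(a * E θ)) ∂μ =
      exp ((b - a) * E z) * partitionFunction μ E b - partitionFunction μ E a := by
  have h_pointwise : ∀ θ, (exp ((b - a) * (E z - E θ)) - 1) * exp (-(a * E θ)) =
      exp ((b - a) * E z) * exp (-(b * E θ)) - exp (-(a * E θ)) := fun θ ↦ by
    rw [sub_mul, one_mul, ← exp_add, ← exp_add]
    ring_nf
  simp only [h_pointwise]
  rw [integral_sub (hb.const_mul _) ha, integral_const_mul, partitionFunction, partitionFunction]

lemma gibbs_ratio_sub_one_eq (ha : Integrable (fun θ ↦ exp (-(a * E θ))) μ)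
    (hb : Integrable (fun θ ↦ exp (-(b * E θ))) μ) (hZa : partitionFunction μ E a ≠ 0) (z : α) :
    (exp (-(a * E z)) / partitionFunction μ E a) / (exp (-(b * E z)) / partitionFunction μ E b)
      - 1 = (∫ θ, (exp ((b - a) * (E z - E θ)) - 1) * exp (-(a * E θ)) ∂μ) /
        partitionFunction μ E a := by
  have h_split : exp (-(a * E z)) = exp ((b - a) * E z) * exp (-(b * E z)) := by
    rw [← exp_add]
    ring_nf
  rw [integral_mul_exp_neg_mul_eq ha hb, h_split]
  field_simp

theorem abs_gibbs_ratio_sub_one_le [IsFiniteMeasure μ] [NeZero μ] (hE : AEMeasurable E μ)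
    {z : α} {c : ℝ} (hosc : ∀ᵐ θ ∂μ, |E θ - E z| ≤ c) :
    |(exp (-(a * E z)) / partitionFunction μ E a) / (exp (-(b * E z)) / partitionFunction μ E b)
      - 1| ≤ |b - a| * c * exp (|b - a| * c) := by
  have hint := integrable_exp_neg_mul_of_abs_sub_le hE hosc
  have hZa : 0 < partitionFunction μ E a := integral_exp_pos (hint a)
  set M := |b - a| * c
  have h_integrand : ∀ᵐ θ ∂μ,
      ‖(exp ((b - a) * (E z - E θ)) - 1) * exp (-(a * E θ))‖ ≤ M * exp M * exp (-(a * E θ)) :=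
    hosc.mono fun θ hθ ↦ by
      have ht : |(b - a) * (E z - E θ)| ≤ M := by
        rw [abs_mul, abs_sub_comm (E z)]
        exact mul_le_mul_of_nonneg_left hθ (abs_nonneg _)
      rw [norm_mul, norm_of_nonneg (exp_pos _).le, Real.norm_eq_abs]
      gcongr
      calc _ ≤ _ := abs_exp_sub_one_le_mul_exp_abs _
        _ ≤ M * exp M := mul_le_mul ht (exp_le_exp.2 ht) (exp_pos _).le ((abs_nonneg _).trans ht)
  rw [gibbs_ratio_sub_one_eq (hint a) (hint b) hZa.ne', abs_div, abs_of_pos hZa,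
    div_le_iff₀ hZa]
  calc _ ≤ ∫ θ, M * exp M * exp (-(a * E θ)) ∂μ :=
        norm_integral_le_of_norm_le ((hint a).const_mul _) h_integrand
    _ = M * exp M * partitionFunction μ E a := integral_const_mul _ _

end Gibbs

theorem tempered_density_ratio_bound_general
    {p : ℕ} (Θ : Set (Fin p → ℝ)) (hΘmeas : MeasurableSet Θ)
    (hΘbdd : Bornology.IsBounded Θ) (hΘpos : 0 < volume Θ)
    (E : (Fin p → ℝ) → ℝ) (hEmeas : Measurable E)
    (oscE : ℝ) (hoscE : oscE = sSup {v : ℝ | ∃ x ∈ Θ, ∃ y ∈ Θ, v = |E x - E y|})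
    (hbdd : BddAbove {v : ℝ | ∃ x ∈ Θ, ∃ y ∈ Θ, v = |E x - E y|})
    (βprev βcur : ℝ)
    (Z : ℝ → ℝ) (hZ : ∀ b : ℝ, Z b = ∫ θ in Θ, Real.exp (-(b * E θ)))
    (z : Fin p → ℝ) (hz : z ∈ Θ) :
    |(Real.exp (-(βprev * E z)) / Z βprev) / (Real.exp (-(βcur * E z)) / Z βcur) - 1| ≤
      |βcur - βprev| * oscE * Real.exp (|βcur - βprev| * oscE) := by
  have : IsFiniteMeasure (volume.restrict Θ) :=
    isFiniteMeasure_restrict.2 hΘbdd.measure_lt_top.ne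
  have : NeZero (volume.restrict Θ) := ⟨by simpa [Measure.restrict_eq_zero] using hΘpos.ne'⟩
  have hosc : ∀ᵐ θ ∂volume.restrict Θ, |E θ - E z| ≤ oscE :=
    (ae_restrict_mem hΘmeas).mono fun θ hθ ↦ hoscE ▸ le_csSup hbdd ⟨θ, hθ, z, hz, rfl⟩
  obtain rfl : Z = partitionFunction (volume.restrict Θ) E := funext hZ
  exact abs_gibbs_ratio_sub_one_le hEmeas.aemeasurable hosc

theorem tempered_density_ratio_bound
    {p : ℕ} (Θ : Set (Fin p → ℝ)) (hΘmeas : MeasurableSet Θ)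
    (hΘbdd : Bornology.IsBounded Θ) (hΘpos : 0 < volume Θ)
    (E : (Fin p → ℝ) → ℝ) (hEmeas : Measurable E)
    (oscE : ℝ) (hoscE : oscE = sSup {v : ℝ | ∃ x ∈ Θ, ∃ y ∈ Θ, v = |E x - E y|})
    (hbdd : BddAbove {v : ℝ | ∃ x ∈ Θ, ∃ y ∈ Θ, v = |E x - E y|})
    (βprev βcur : ℝ) (hβprev : βprev ∈ Set.Ioc (0:ℝ) 1) (hβcur : βcur ∈ Set.Ioc (0:ℝ) 1)
    (Z : ℝ → ℝ) (hZ : ∀ b : ℝ, Z b = ∫ θ in Θ, Real.exp (-(b * E θ)))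
    (z : Fin p → ℝ) (hz : z ∈ Θ) :
    |(Real.exp (-(βprev * E z)) / Z βprev) / (Real.exp (-(βcur * E z)) / Z βcur) - 1| ≤
      |βcur - βprev| * oscE * Real.exp (|βcur - βprev| * oscE) :=
  tempered_density_ratio_bound_general Θ hΘmeas hΘbdd hΘpos E hEmeas oscE hoscE hbdd βprev βcur Z hZ
    z hz
end

section
/- Assume M_j is reversible with respect to Π_j with ‖Π_{j-1}/Π_j‖_∞ < ∞. Then for every f ∈ L²(Π_{j-1}), (1/2) ∫∫ (f(y) − f(x))² Π_{j-1}(dx) Q_j(x, dy) = ⟨f, (I − Q_j) f⟩_{j-1} + ∫ Π_{j-1}(dx) f²(x) ∫ M_j(x, dy) ∫ M_j(y, dz) (Π_{j-1}(z)/Π_j(z) − 1). -/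
open MeasureTheory ProbabilityTheory

/-!
Since `Π_{j-1} = r Π_j`, the measure `Π_{j-1}(dx) Q(x, dy)` is the `(x, y)`-marginal of
`r(x) Π_j(dx) M(x, dx') M(x', dy) r(y)`, which reversibility of `M` makes symmetric in `x` and `y`.
Expanding `(f y - f x)²`, this symmetry turns the `f(y)²` term into the `f(x)²` term, so half the
Dirichlet form is `∫ f(x)² Q(x, Θ) dΠ_{j-1} - ⟨f, Q f⟩_{j-1}`; finally `Q(x, Θ) - 1` is the
iterated integral of `r - 1` because `M` is Markov.
-/

open scoped ENNReal

section

variable {α β : Type*} [MeasurableSpace α] [MeasurableSpace β]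

theorem lintegral_compProd_mul {μ : Measure α} [SFinite μ] {κ : Kernel α β}
    [IsSFiniteKernel κ] {u : α → ℝ≥0∞} {v : β → ℝ≥0∞} (hu : Measurable u) (hv : Measurable v) :
    ∫⁻ p, u p.1 * v p.2 ∂(μ ⊗ₘ κ) = ∫⁻ x, u x * ∫⁻ y, v y ∂κ x ∂μ := by
  rw [Measure.lintegral_compProd (f := fun p => u p.1 * v p.2) (by fun_prop)]
  simp_rw [lintegral_const_mul _ hv]

namespace IsReversible

variable {π : Measure α} [IsFiniteMeasure π] {κ : Kernel α α} [IsFiniteKernel κ]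

theorem measurePreserving_swap (h : IsReversible κ π) :
    MeasurePreserving Prod.swap (π ⊗ₘ κ) (π ⊗ₘ κ) := by
  refine ⟨measurable_swap, ext_of_generate_finite _ generateFrom_prod.symm isPiSystem_prod ?_ ?_⟩
  · rintro _ ⟨A, hA, B, hB, rfl⟩
    rw [Measure.map_apply measurable_swap (hA.prod hB), Set.preimage_swap_prod,
      Measure.compProd_apply_prod hB hA, Measure.compProd_apply_prod hA hB, h A B hA hB]
  · rw [Measure.map_apply measurable_swap .univ, Set.preimage_univ]

theorem lintegral_mul_lintegral_comm (h : IsReversible κ π) {u v : α → ℝ≥0∞}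
    (hu : Measurable u) (hv : Measurable v) :
    ∫⁻ x, u x * ∫⁻ y, v y ∂κ x ∂π = ∫⁻ x, v x * ∫⁻ y, u y ∂κ x ∂π := by
  rw [← lintegral_compProd_mul hu hv, ← lintegral_compProd_mul hv hu,
    ← h.measurePreserving_swap.lintegral_comp (f := fun p => v p.1 * u p.2) (by fun_prop)]
  simp_rw [Prod.fst_swap, Prod.snd_swap, mul_comm]

theorem lintegral_mul_lintegral_lintegral_comm (h : IsReversible κ π) {u v : α → ℝ≥0∞}
    (hu : Measurable u) (hv : Measurable v) :
    ∫⁻ x, u x * ∫⁻ y, ∫⁻ z, v z ∂κ y ∂κ x ∂π = ∫⁻ x, v x * ∫⁻ y, ∫⁻ z, u z ∂κ y ∂κ x ∂π := by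
  rw [h.lintegral_mul_lintegral_comm hu hv.lintegral_kernel,
    h.lintegral_mul_lintegral_comm hv hu.lintegral_kernel]
  simp_rw [mul_comm]

end IsReversible

section compProd

variable {μ : Measure α} [SFinite μ] {κ : Kernel α β}

theorem integrable_comp_fst_compProd [IsFiniteKernel κ] {g : α → ℝ} (hgm : Measurable g)
    (hg : Integrable g μ) : Integrable (fun p : α × β => g p.1) (μ ⊗ₘ κ) := by
  refine ⟨(hgm.comp measurable_fst).aestronglyMeasurable, ?_⟩
  calc ∫⁻ p, ‖g p.1‖ₑ ∂(μ ⊗ₘ κ) = ∫⁻ x, ‖g x‖ₑ * κ x Set.univ ∂μ := by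
        rw [Measure.lintegral_compProd (f := fun p => ‖g p.1‖ₑ) (by fun_prop)]
        simp
    _ ≤ ∫⁻ x, ‖g x‖ₑ * κ.bound ∂μ :=
        lintegral_mono fun x => mul_le_mul_right (κ.measure_le_bound x Set.univ) _
    _ < ⊤ := by
        rw [lintegral_mul_const' _ _ κ.bound_ne_top]
        exact ENNReal.mul_lt_top hg.2 κ.bound_lt_top

theorem memLp_two_comp_fst_compProd [IsFiniteKernel κ] {f : α → ℝ} (hfm : Measurable f)
    (hf : Integrable (fun x => f x ^ 2) μ) : MemLp (fun p : α × β => f p.1) 2 (μ ⊗ₘ κ) :=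
  (memLp_two_iff_integrable_sq (hfm.comp measurable_fst).aestronglyMeasurable).2
    (integrable_comp_fst_compProd (by fun_prop) hf)

variable [IsSFiniteKernel κ] {g : α → ℝ} {h : β → ℝ}

theorem integral_mul_compProd (hgh : Integrable (fun p : α × β => g p.1 * h p.2) (μ ⊗ₘ κ)) :
    ∫ p, g p.1 * h p.2 ∂(μ ⊗ₘ κ) = ∫ x, g x * ∫ y, h y ∂κ x ∂μ := by
  rw [Measure.integral_compProd hgh]
  simp_rw [integral_const_mul]

theorem integrable_mul_integral_of_compProd
    (hgh : Integrable (fun p : α × β => g p.1 * h p.2) (μ ⊗ₘ κ)) :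
    Integrable (fun x => g x * ∫ y, h y ∂κ x) μ := by
  simpa only [integral_const_mul, Kernel.prodMkLeft_apply, Kernel.const_apply] using
    hgh.integral_compProd

end compProd

theorem half_integral_integral_sub_sq {μ : Measure α} [IsFiniteMeasure μ] {Q : Kernel α α}
    [IsFiniteKernel Q] (hsymm : MeasurePreserving Prod.swap (μ ⊗ₘ Q) (μ ⊗ₘ Q)) {f : α → ℝ}
    (hfm : Measurable f) (hf : Integrable (fun x => f x ^ 2) μ) :
    (1 / 2) * ∫ x, ∫ y, (f y - f x) ^ 2 ∂Q x ∂μ =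
      ∫ x, f x * (f x - ∫ y, f y ∂Q x) ∂μ + ∫ x, f x ^ 2 * ((Q x).real Set.univ - 1) ∂μ := by
  set ν := μ ⊗ₘ Q
  have h₁ : MemLp (fun p : α × α => f p.1) 2 ν := memLp_two_comp_fst_compProd hfm hf
  have h₂ : MemLp (fun p : α × α => f p.2) 2 ν := h₁.comp_measurePreserving hsymm
  have hsq₁ : Integrable (fun p : α × α => f p.1 ^ 2) ν := h₁.integrable_sq
  have hmul : Integrable (fun p : α × α => f p.1 * f p.2) ν := h₁.integrable_mul h₂
  have hswap : ∫ p, f p.2 ^ 2 ∂ν = ∫ p, f p.1 ^ 2 ∂ν :=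
    hsymm.integral_comp MeasurableEquiv.prodComm.measurableEmbedding fun p => f p.1 ^ 2
  have hmass : ∫ p, f p.1 ^ 2 ∂ν = ∫ x, f x ^ 2 * (Q x).real Set.univ ∂μ := by
    rw [Measure.integral_compProd hsq₁]
    simp [mul_comm]
  have hexpand : ∫ x, ∫ y, (f y - f x) ^ 2 ∂Q x ∂μ
      = 2 * (∫ p, f p.1 ^ 2 ∂ν - ∫ p, f p.1 * f p.2 ∂ν) := by
    calc ∫ x, ∫ y, (f y - f x) ^ 2 ∂Q x ∂μ
        = ∫ p, (f p.2 ^ 2 + f p.1 ^ 2 - 2 * (f p.1 * f p.2)) ∂ν := by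
          rw [← Measure.integral_compProd (f := fun p => (f p.2 - f p.1) ^ 2)
            (h₂.sub h₁).integrable_sq]
          congr with p
          ring
      _ = ∫ p, f p.2 ^ 2 ∂ν + ∫ p, f p.1 ^ 2 ∂ν - 2 * ∫ p, f p.1 * f p.2 ∂ν := by
          rw [integral_sub (f := fun p => f p.2 ^ 2 + f p.1 ^ 2) (h₂.integrable_sq.add hsq₁)
              (hmul.const_mul 2),
            integral_add h₂.integrable_sq hsq₁, integral_const_mul]
      _ = _ := by rw [hswap]; ring
  have hc : Integrable (fun x => f x ^ 2 * (Q x).real Set.univ) μ := by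
    simpa using integrable_mul_integral_of_compProd (g := fun x => f x ^ 2) (h := fun _ => 1)
      (by simpa using hsq₁)
  simp_rw [hexpand, mul_sub, mul_one]
  rw [hmass, integral_mul_compProd hmul, integral_sub (by simpa only [sq] using hf)
    (integrable_mul_integral_of_compProd hmul), integral_sub hc hf]
  simp only [sq]
  ring

theorem measurable_uncurry_ofReal {r : α → ℝ} (hr : Measurable r) :
    Measurable (Function.uncurry fun (_ : α) z => ENNReal.ofReal (r z)) := by
  fun_prop

noncomputable def Qkernel (M : Kernel α α) [IsSFiniteKernel M] (r : α → ℝ) : Kernel α α :=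
  (M.withDensity fun _ z => ENNReal.ofReal (r z)) ∘ₖ M

section Qkernel

variable {M : Kernel α α} [IsSFiniteKernel M] {r : α → ℝ}

theorem Qkernel_apply (hr : Measurable r) (x : α) : Qkernel M r x = Qmeas M r x := by
  rw [Qkernel, Kernel.comp_apply, Qmeas]
  congr with y : 1
  exact Kernel.withDensity_apply _ (measurable_uncurry_ofReal hr) y

theorem lintegral_Qkernel (hr : Measurable r) (x : α) {g : α → ℝ≥0∞} (hg : Measurable g) :
    ∫⁻ z, g z ∂Qkernel M r x = ∫⁻ y, ∫⁻ z, ENNReal.ofReal (r z) * g z ∂M y ∂M x := by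
  rw [Qkernel, Kernel.lintegral_comp _ _ _ hg]
  simp_rw [Kernel.lintegral_withDensity _ (measurable_uncurry_ofReal hr) _ hg]

theorem integral_Qkernel (hr : Measurable r) (hr₀ : ∀ z, 0 ≤ r z) {f : α → ℝ} {x : α}
    (hf : Integrable f (Qkernel M r x)) : ∫ z, f z ∂Qkernel M r x = Qop M r f x := by
  rw [Qkernel, Kernel.integral_comp hf, Qop]
  refine integral_congr_ae (.of_forall fun y => ?_)
  beta_reduce
  rw [Kernel.withDensity_apply _ (measurable_uncurry_ofReal hr),
    integral_withDensity_eq_integral_toReal_smul hr.ennreal_ofReal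
      (.of_forall fun _ => ENNReal.ofReal_lt_top)]
  simp [ENNReal.toReal_ofReal (hr₀ _), mul_comm]

theorem isFiniteKernel_Qkernel [IsFiniteKernel M] {ρ : ℝ} (hρ : ∀ z, r z ≤ ρ) :
    IsFiniteKernel (Qkernel M r) :=
  have := Kernel.isFiniteKernel_withDensity_of_bounded M ENNReal.ofReal_ne_top
    fun _ z => ENNReal.ofReal_le_ofReal (hρ z)
  inferInstanceAs (IsFiniteKernel (_ ∘ₖ M))

theorem isReversible_Qkernel {π : Measure α} [IsFiniteMeasure π] [IsFiniteKernel M]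
    (h : IsReversible M π) (hr : Measurable r) :
    IsReversible (Qkernel M r) (π.withDensity fun z => ENNReal.ofReal (r z)) := by
  set R := fun z => ENNReal.ofReal (r z)
  have hR : Measurable R := hr.ennreal_ofReal
  have flow : ∀ {A B : Set α}, MeasurableSet A → MeasurableSet B →
      ∫⁻ x in A, Qkernel M r x B ∂(π.withDensity R)
        = ∫⁻ x, A.indicator R x * ∫⁻ y, ∫⁻ z, B.indicator R z ∂M y ∂M x ∂π := by
    intro A B hA hB
    rw [setLIntegral_withDensity_eq_setLIntegral_mul _ hR (Kernel.measurable_coe _ hB) hA,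
      ← lintegral_indicator hA]
    refine lintegral_congr fun x => ?_
    by_cases hx : x ∈ A
    · rw [Set.indicator_of_mem hx, Set.indicator_of_mem hx, Pi.mul_apply,
        ← lintegral_indicator_one (μ := Qkernel M r x) hB,
        lintegral_Qkernel hr x (measurable_one.indicator hB)]
      refine congrArg _ (lintegral_congr fun y => lintegral_congr fun z => ?_)
      by_cases hz : z ∈ B <;> simp [hz, R]
    · simp [hx]
  intro A B hA hB
  rw [flow hA hB, flow hB hA,
    h.lintegral_mul_lintegral_lintegral_comm (hR.indicator hA) (hR.indicator hB)]

theorem integral_integral_sub_one [IsMarkovKernel M] (hr : Measurable r) (hr₀ : ∀ z, 0 ≤ r z)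
    {ρ : ℝ} (hρ : ∀ z, r z ≤ ρ) (x : α) :
    ∫ y, ∫ z, (r z - 1) ∂M y ∂M x = (Qkernel M r x).real Set.univ - 1 := by
  have hr_int : Integrable r ((M ∘ₖ M) x) := .of_bound hr.aestronglyMeasurable ρ
    (.of_forall fun z => (Real.norm_of_nonneg (hr₀ z)).trans_le (hρ z))
  have := isFiniteKernel_Qkernel (M := M) hρ
  have hmass : (Qkernel M r x).real Set.univ = ∫ y, ∫ z, r z ∂M y ∂M x := by
    simpa [Qop] using integral_Qkernel hr hr₀ (f := fun _ => (1 : ℝ)) (integrable_const 1)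
  rw [← Kernel.integral_comp (f := fun z => r z - 1) (hr_int.sub (integrable_const 1)),
    integral_sub hr_int (integrable_const 1), Kernel.integral_comp hr_int, hmass]
  simp

end Qkernel

end

theorem dirichlet_form_identity
    {Θ : Type*} [MeasurableSpace Θ]
    (πprev πcur : Measure Θ)
    (hπprev : IsProbabilityMeasure πprev) (hπcur : IsProbabilityMeasure πcur)
    (M : Kernel Θ Θ) (hM : IsMarkovKernel M)
    (hrev : IsReversible M πcur)
    (r : Θ → ℝ) (hrmeas : Measurable r) (hrnonneg : ∀ z, 0 ≤ r z)
    (hdens : πprev = πcur.withDensity (fun z => ENNReal.ofReal (r z)))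
    (ρ : ℝ) (hρ : ∀ z, r z ≤ ρ)
    (f : Θ → ℝ) (hfmeas : Measurable f)
    (hfL2 : Integrable (fun x => (f x) ^ 2) πprev) :
    (1 / 2) * ∫ x, (∫ y, (f y - f x) ^ 2 ∂(Qmeas M r x)) ∂πprev =
      (∫ x, f x * (f x - Qop M r f x) ∂πprev) +
        ∫ x, (f x) ^ 2 * (∫ y, (∫ z, (r z - 1) ∂(M y)) ∂(M x)) ∂πprev := by
  have := hπprev
  have := hπcur
  have := hM
  have := isFiniteKernel_Qkernel (M := M) hρ
  have hsymm : MeasurePreserving Prod.swap (πprev ⊗ₘ Qkernel M r) (πprev ⊗ₘ Qkernel M r) := by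
    subst hdens
    exact (isReversible_Qkernel hrev hrmeas).measurePreserving_swap
  have hf_int : Integrable (fun p : Θ × Θ => f p.2) (πprev ⊗ₘ Qkernel M r) :=
    ((memLp_two_comp_fst_compProd hfmeas hfL2).comp_measurePreserving hsymm).integrable
      one_le_two
  have hQop : ∀ᵐ x ∂πprev, Qop M r f x = ∫ y, f y ∂Qkernel M r x := by
    filter_upwards [((Measure.integrable_compProd_iff hf_int.aestronglyMeasurable).1 hf_int).1]
      with x hx
    exact (integral_Qkernel hrmeas hrnonneg hx).symm
  simp_rw [← Qkernel_apply hrmeas, integral_integral_sub_one hrmeas hrnonneg hρ,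
    half_integral_integral_sub_sq hsymm hfmeas hfL2]
  congr 1
  exact integral_congr_ae (hQop.mono fun x hx => by simp only [hx])
end
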